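/- arXiv:math/0605473 — 5 statements merged into one kernel-verified Lean document; each statement's English description precedes it below -/
import Mathlib

section
/- Suppose that for every sequence kₙ → ∞ the following two conditions hold: (2.7) limsup_n sup_{θ∈Θ} P_θ^{(n)}( R_{kₙ,n} − ‖Π_{kₙ}θ − Π_{kₙ}θ̂⁽ⁿ⁾‖² ≤ −z_α τ̂_{kₙ,n,θ} ) ≤ α, and (2.8) for every sequence Mₙ → ∞, sup_{θ∈Θ} P_θ^{(n)}( |R_{kₙ,n} − ‖Π_{kₙ}θ − Π_{kₙ}θ̂⁽ⁿ⁾‖²| ≥ Mₙ τ̂_{kₙ,n,θ} ) → 0 as n → ∞. Then for any sequence kₙ → ∞ the sets Ĉₙ = { θ ∈ Θ : ‖θ − θ̂⁽ⁿ⁾‖ ≤ √(max(z_α τ̂_{kₙ,n,θ} + R_{kₙ,n}, 0)) + 2B_{kₙ} } satisfy liminf_n inf_{θ∈Θ} P_θ^{(n)}(θ ∈ Ĉₙ) ≥ 1 − α, and for every sequence Mₙ → ∞, sup_{θ∈Θ} P_θ^{(n)}( diam(Ĉₙ) ≥ Mₙ [ σ̄ kₙ^{1/4}/√n + B_{kₙ}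 + ‖θ − θ̂⁽ⁿ⁾‖ ] ) → 0 as n → ∞. -/
open MeasureTheory Filter

/-- The Hilbert space `ℓ²` of square-summable real sequences. -/
noncomputable abbrev ellTwo : Type := lp (fun _ : ℕ => ℝ) 2

/-- The truncation `Π_k θ`, keeping the first `k` coordinates of `θ ∈ ℓ²`. -/
noncomputable def truncate (k : ℕ) (θ : ellTwo) : ellTwo :=
  ∑ i ∈ Finset.range k, lp.single 2 i (θ i)

/-- `B_k = sup_{θ ∈ Θ} ‖θ - Π_k θ‖`. -/
noncomputable def biasBound (Θ : Set ellTwo) (k : ℕ) : ℝ :=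
  ⨆ θ : Θ, ‖(θ : ellTwo) - truncate k θ‖

/-- The scale `τ̂_{k,n,θ} = √(2σ(θ)⁴k/n² + (4σ(θ)²/n)‖Π_kθ - Π_kθ̂⁽ⁿ⁾‖²)`. -/
noncomputable def tauHat {Ωn : Type*} (σf : ellTwo → ℝ) (θhat : Ωn → ellTwo)
    (k n : ℕ) (θ : ellTwo) (ω : Ωn) : ℝ :=
  Real.sqrt (2 * σf θ ^ 4 * k / (n : ℝ) ^ 2
    + 4 * σf θ ^ 2 / n * ‖truncate k θ - truncate k (θhat ω)‖ ^ 2)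

/-- The confidence set
`Ĉₙ = {θ ∈ Θ : ‖θ - θ̂⁽ⁿ⁾‖ ≤ √(max(z_α τ̂_{k,n,θ} + R_{k,n}, 0)) + 2B_k}`. -/
noncomputable def confSet {Ωn : Type*} (Θ : Set ellTwo) (σf : ellTwo → ℝ)
    (θhat : Ωn → ellTwo) (R : Ωn → ℝ) (zα : ℝ) (k n : ℕ) (ω : Ωn) : Set ellTwo :=
  {θ | θ ∈ Θ ∧ ‖θ - θhat ω‖
    ≤ Real.sqrt (max (zα * tauHat σf θhat k n θ ω + R ω) 0) + 2 * biasBound Θ k}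

open scoped ENNReal NNReal

lemma truncate_apply (k : ℕ) (x : ellTwo) (j : ℕ) :
    (truncate k x : ∀ _ : ℕ, ℝ) j = if j < k then x j else 0 := by
  simp only [truncate, lp.coeFn_sum, Finset.sum_apply, lp.single_apply]
  by_cases h : j < k
  · rw [Finset.sum_eq_single j]
    · simp [h]
    · intro i _ hne; simp [Ne.symm hne]
    · intro hj; exact absurd (Finset.mem_range.2 h) hj
  · rw [if_neg h, Finset.sum_eq_zero]
    intro i hi
    have : j ≠ i := by rintro rfl; exact h (Finset.mem_range.1 hi)
    simp [this]

lemma truncate_sub (k : ℕ) (x y : ellTwo) :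
    truncate k (x - y) = truncate k x - truncate k y := by
  apply lp.ext
  funext j
  have := truncate_apply k (x - y) j
  simp only [lp.coeFn_sub, Pi.sub_apply, truncate_apply] at *
  split <;> simp_all

lemma norm_truncate_le (k : ℕ) (x : ellTwo) : ‖truncate k x‖ ≤ ‖x‖ := by
  have hp : 0 < (2 : ℝ≥0∞).toReal := by norm_num
  have h1 := lp.norm_sum_single (E := fun _ : ℕ => ℝ) (p := 2) hp (fun i => x i) (Finset.range k)
  have h2 := lp.norm_compl_sum_single (E := fun _ : ℕ => ℝ) (p := 2) hp x (Finset.range k)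
  rw [show (truncate k x) = ∑ i ∈ Finset.range k, lp.single 2 i (x i) from rfl]
  have key : ‖∑ i ∈ Finset.range k, lp.single 2 i (x i)‖ ^ (2:ℝ≥0∞).toReal ≤ ‖x‖ ^ (2:ℝ≥0∞).toReal := by
    rw [h1]
    nlinarith [norm_nonneg (x - ∑ i ∈ Finset.range k, lp.single 2 i (x i)),
      Real.rpow_nonneg (norm_nonneg (x - ∑ i ∈ Finset.range k, lp.single 2 i (x i))) (2:ℝ≥0∞).toReal, h2]
  have h2' : (2:ℝ≥0∞).toReal = (2:ℝ) := by norm_num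
  rw [h2'] at key
  have e1 : ‖∑ i ∈ Finset.range k, lp.single 2 i (x i)‖ ^ (2:ℝ)
      = ‖∑ i ∈ Finset.range k, lp.single 2 i (x i)‖ ^ (2:ℕ) := by
    rw [← Real.rpow_natCast]; norm_num
  have e2 : ‖x‖ ^ (2:ℝ) = ‖x‖ ^ (2:ℕ) := by rw [← Real.rpow_natCast]; norm_num
  rw [e1, e2] at key
  nlinarith [norm_nonneg (∑ i ∈ Finset.range k, lp.single 2 i (x i)), norm_nonneg x]

lemma sqrt_add_le' {x y : ℝ} (hx : 0 ≤ x) (hy : 0 ≤ y) :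
    Real.sqrt (x + y) ≤ Real.sqrt x + Real.sqrt y := by
  rw [show x + y = (x + y) from rfl]
  have h : Real.sqrt (x+y) ^ 2 = x + y := Real.sq_sqrt (by linarith)
  nlinarith [Real.sq_sqrt hx, Real.sq_sqrt hy, Real.sqrt_nonneg x, Real.sqrt_nonneg y,
    Real.sqrt_nonneg (x+y), sq_nonneg (Real.sqrt x + Real.sqrt y - Real.sqrt (x+y))]

lemma sqrt_mul_le_half {p q : ℝ} (hp : 0 ≤ p) (hq : 0 ≤ q) :
    Real.sqrt (p * q) ≤ (p + q) / 2 := by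
  nlinarith [Real.sq_sqrt (mul_nonneg hp hq), Real.sqrt_nonneg (p*q), sq_nonneg (p - q),
    sq_nonneg (Real.sqrt (p*q) - (p+q)/2), sq_nonneg (Real.sqrt (p*q) + (p+q)/2)]

lemma real_sqrt_tendsto : Tendsto Real.sqrt atTop atTop := by
  apply tendsto_atTop_atTop.2
  intro b
  refine ⟨b ^ 2, fun a ha => ?_⟩
  rcases le_or_gt b 0 with hb | hb
  · exact hb.trans (Real.sqrt_nonneg a)
  · calc b = Real.sqrt (b ^ 2) := (Real.sqrt_sq hb.le).symm
    _ ≤ Real.sqrt a := Real.sqrt_le_sqrt ha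

lemma tauHat_nonneg {Ωn : Type*} (σf : ellTwo → ℝ) (θhat : Ωn → ellTwo)
    (k n : ℕ) (θ : ellTwo) (ω : Ωn) : 0 ≤ tauHat σf θhat k n θ ω := Real.sqrt_nonneg _

lemma tauHat_le {Ωn : Type*} {σf : ellTwo → ℝ} (θhat : Ωn → ellTwo)
    (k n : ℕ) (θ : ellTwo) (ω : Ωn) {σbar : ℝ}
    (h1 : 0 ≤ σf θ) (h2 : σf θ ≤ σbar) :
    tauHat σf θhat k n θ ω ≤ Real.sqrt (2 * σbar ^ 4 * k / (n:ℝ) ^ 2)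
      + Real.sqrt (4 * σbar ^ 2 / n) * ‖truncate k θ - truncate k (θhat ω)‖ := by
  set u := ‖truncate k θ - truncate k (θhat ω)‖ with hu
  have hun : (0:ℝ) ≤ u := norm_nonneg _
  have hn : (0:ℝ) ≤ (n:ℝ) := Nat.cast_nonneg n
  have hk : (0:ℝ) ≤ (k:ℝ) := Nat.cast_nonneg k
  have hA' : (0:ℝ) ≤ 2 * σbar ^ 4 * k / (n:ℝ) ^ 2 := by positivity
  have hB' : (0:ℝ) ≤ 4 * σbar ^ 2 / n := by positivity
  have step1 : tauHat σf θhat k n θ ω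
      ≤ Real.sqrt (2 * σbar ^ 4 * k / (n:ℝ) ^ 2 + 4 * σbar ^ 2 / n * u ^ 2) := by
    apply Real.sqrt_le_sqrt
    have h4 : σf θ ^ 4 ≤ σbar ^ 4 := pow_le_pow_left₀ h1 h2 4
    have h2' : σf θ ^ 2 ≤ σbar ^ 2 := pow_le_pow_left₀ h1 h2 2
    have i1 : (0:ℝ) ≤ ((n:ℝ)^2)⁻¹ := by positivity
    have i2 : (0:ℝ) ≤ ((n:ℝ))⁻¹ := by positivity
    rw [div_eq_mul_inv, div_eq_mul_inv, div_eq_mul_inv, div_eq_mul_inv]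
    have t1 : 2 * σf θ ^ 4 * (k:ℝ) * ((n:ℝ)^2)⁻¹ ≤ 2 * σbar ^ 4 * (k:ℝ) * ((n:ℝ)^2)⁻¹ := by
      apply mul_le_mul_of_nonneg_right _ i1; nlinarith
    have t2 : 4 * σf θ ^ 2 * (n:ℝ)⁻¹ * u ^ 2 ≤ 4 * σbar ^ 2 * (n:ℝ)⁻¹ * u ^ 2 := by
      apply mul_le_mul_of_nonneg_right _ (sq_nonneg u)
      apply mul_le_mul_of_nonneg_right _ i2; nlinarith
    linarith
  have step2 : Real.sqrt (2 * σbar ^ 4 * k / (n:ℝ) ^ 2 + 4 * σbar ^ 2 / n * u ^ 2)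
      ≤ Real.sqrt (2 * σbar ^ 4 * k / (n:ℝ) ^ 2) + Real.sqrt (4 * σbar ^ 2 / n) * u := by
    calc Real.sqrt (2 * σbar ^ 4 * k / (n:ℝ) ^ 2 + 4 * σbar ^ 2 / n * u ^ 2)
        ≤ Real.sqrt (2 * σbar ^ 4 * k / (n:ℝ) ^ 2) + Real.sqrt (4 * σbar ^ 2 / n * u ^ 2) :=
          sqrt_add_le' hA' (by positivity)
      _ = Real.sqrt (2 * σbar ^ 4 * k / (n:ℝ) ^ 2) + Real.sqrt (4 * σbar ^ 2 / n) * u := by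
          rw [Real.sqrt_mul hB', Real.sqrt_sq hun]
  exact step1.trans step2

lemma le_biasBound {Θ : Set ellTwo} (hBdd : BddAbove (Set.range fun θ : Θ => ‖(θ : ellTwo) - truncate k θ‖))
    {θ : ellTwo} (hθ : θ ∈ Θ) : ‖θ - truncate k θ‖ ≤ biasBound Θ k :=
  le_ciSup hBdd ⟨θ, hθ⟩

lemma norm_le_trunc_add {Θ : Set ellTwo} {k : ℕ}
    (hBdd : BddAbove (Set.range fun θ : Θ => ‖(θ : ellTwo) - truncate k θ‖))
    {θ ψ : ellTwo} (hθ : θ ∈ Θ) (hψ : ψ ∈ Θ) :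
    ‖θ - ψ‖ ≤ ‖truncate k θ - truncate k ψ‖ + 2 * biasBound Θ k := by
  have hd : θ - ψ = (truncate k θ - truncate k ψ) + ((θ - truncate k θ) - (ψ - truncate k ψ)) := by
    abel
  calc ‖θ - ψ‖ = ‖(truncate k θ - truncate k ψ) + ((θ - truncate k θ) - (ψ - truncate k ψ))‖ := by
        rw [← hd]
    _ ≤ ‖truncate k θ - truncate k ψ‖ + ‖(θ - truncate k θ) - (ψ - truncate k ψ)‖ := norm_add_le _ _
    _ ≤ ‖truncate k θ - truncate k ψ‖ + (‖θ - truncate k θ‖ + ‖ψ - truncate k ψ‖) := by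
        linarith [norm_sub_le (θ - truncate k θ) (ψ - truncate k ψ)]
    _ ≤ ‖truncate k θ - truncate k ψ‖ + 2 * biasBound Θ k := by
        linarith [le_biasBound hBdd hθ, le_biasBound hBdd hψ]

lemma norm_trunc_sub_le (k : ℕ) (x y : ellTwo) :
    ‖truncate k x - truncate k y‖ ≤ ‖x - y‖ := by
  rw [← truncate_sub]; exact norm_truncate_le k (x - y)

lemma mem_confSet_of {Ωn : Type*} {Θ : Set ellTwo} {σf : ellTwo → ℝ} {θhat : Ωn → ellTwo}
    {R : Ωn → ℝ} {zα : ℝ} {k n : ℕ} {ω : Ωn}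
    (hBdd : BddAbove (Set.range fun θ : Θ => ‖(θ : ellTwo) - truncate k θ‖))
    {θ : ellTwo} (hθ : θ ∈ Θ) (hθh : θhat ω ∈ Θ)
    (h : ¬ (R ω - ‖truncate k θ - truncate k (θhat ω)‖ ^ 2
        ≤ -(zα * tauHat σf θhat k n θ ω))) :
    θ ∈ confSet Θ σf θhat R zα k n ω := by
  push_neg at h
  set u := ‖truncate k θ - truncate k (θhat ω)‖ with hu
  have hun : (0:ℝ) ≤ u := norm_nonneg _
  have h1 : u ^ 2 ≤ max (zα * tauHat σf θhat k n θ ω + R ω) 0 :=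
    le_max_of_le_left (by linarith)
  have h2 : u ≤ Real.sqrt (max (zα * tauHat σf θhat k n θ ω + R ω) 0) := by
    calc u = Real.sqrt (u ^ 2) := (Real.sqrt_sq hun).symm
      _ ≤ _ := Real.sqrt_le_sqrt h1
  refine ⟨hθ, ?_⟩
  calc ‖θ - θhat ω‖ ≤ u + 2 * biasBound Θ k := norm_le_trunc_add hBdd hθ hθh
    _ ≤ _ := by linarith

lemma real_key {t u' u v a b B zα M' R τθ τx : ℝ}
    (ht : 0 ≤ t) (hv : 0 ≤ v) (hu : 0 ≤ u) (hu' : 0 ≤ u') (ha : 0 ≤ a) (hb : 0 ≤ b)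
    (hB : 0 ≤ B) (hz : 0 < zα) (hM' : 0 ≤ M')
    (hu_v : u ≤ v) (hu't : u' ≤ t)
    (hτθle : τθ ≤ a + b * u) (hτxle : τx ≤ a + b * u')
    (hgood : |R - u ^ 2| < M' * τθ)
    (hxle : t ≤ Real.sqrt (max (zα * τx + R) 0) + 2 * B) :
    t ≤ 2 * Real.sqrt (zα * a) + zα * b + 3 * v + 2 * Real.sqrt (M' * a) + M' * b + 4 * B := by
  have hR : R ≤ v ^ 2 + M' * a + M' * b * v := by
    have h1 : R - u ^ 2 < M' * τθ := (abs_lt.mp hgood).2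
    have h3 : τθ ≤ a + b * v := hτθle.trans (by nlinarith)
    have h2 : M' * τθ ≤ M' * (a + b * v) := mul_le_mul_of_nonneg_left h3 hM'
    have h4 : u ^ 2 ≤ v ^ 2 := by nlinarith
    nlinarith
  have hA1 : 0 ≤ zα * a := mul_nonneg hz.le ha
  have hA2 : 0 ≤ zα * b * t := mul_nonneg (mul_nonneg hz.le hb) ht
  have hA3 : 0 ≤ v ^ 2 := sq_nonneg v
  have hA4 : 0 ≤ M' * a := mul_nonneg hM' ha
  have hA5 : 0 ≤ M' * b * v := mul_nonneg (mul_nonneg hM' hb) hv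
  have hmax : max (zα * τx + R) 0
      ≤ zα * a + (zα * b * t + (v ^ 2 + (M' * a + M' * b * v))) := by
    apply max_le
    · have : zα * τx ≤ zα * (a + b * u') := mul_le_mul_of_nonneg_left hτxle hz.le
      nlinarith [mul_le_mul_of_nonneg_left hu't (mul_nonneg hz.le hb)]
    · linarith
  have c1 : Real.sqrt (max (zα * τx + R) 0)
      ≤ Real.sqrt (zα * a) + (Real.sqrt (zα * b * t)
        + (Real.sqrt (v ^ 2) + (Real.sqrt (M' * a) + Real.sqrt (M' * b * v)))) := by
    calc Real.sqrt (max (zα * τx + R) 0)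
        ≤ Real.sqrt (zα * a + (zα * b * t + (v ^ 2 + (M' * a + M' * b * v)))) :=
          Real.sqrt_le_sqrt hmax
      _ ≤ Real.sqrt (zα * a) + Real.sqrt (zα * b * t + (v ^ 2 + (M' * a + M' * b * v))) :=
          sqrt_add_le' hA1 (by linarith)
      _ ≤ Real.sqrt (zα * a) + (Real.sqrt (zα * b * t)
            + Real.sqrt (v ^ 2 + (M' * a + M' * b * v))) := by
          linarith [sqrt_add_le' hA2 (show (0:ℝ) ≤ v ^ 2 + (M' * a + M' * b * v) by linarith)]
      _ ≤ Real.sqrt (zα * a) + (Real.sqrt (zα * b * t)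
            + (Real.sqrt (v ^ 2) + Real.sqrt (M' * a + M' * b * v))) := by
          linarith [sqrt_add_le' hA3 (show (0:ℝ) ≤ M' * a + M' * b * v by linarith)]
      _ ≤ _ := by linarith [sqrt_add_le' hA4 hA5]
  have d1 : Real.sqrt (zα * b * t) ≤ (zα * b + t) / 2 :=
    sqrt_mul_le_half (mul_nonneg hz.le hb) ht
  have d3 : Real.sqrt (M' * b * v) ≤ (M' * b + v) / 2 :=
    sqrt_mul_le_half (mul_nonneg hM' hb) hv
  have d2 : Real.sqrt (v ^ 2) = v := Real.sqrt_sq hv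
  rw [d2] at c1
  linarith

lemma member_bound {Ωn : Type*} {Θ : Set ellTwo} {σf : ellTwo → ℝ} {θhat : Ωn → ellTwo}
    {R : Ωn → ℝ} {zα σbar M' : ℝ} {k n : ℕ} {ω : Ωn}
    (hBdd : BddAbove (Set.range fun θ : Θ => ‖(θ : ellTwo) - truncate k θ‖))
    (hσf : ∀ θ ∈ Θ, 0 < σf θ ∧ σf θ ≤ σbar) (hz : 0 < zα) (hM' : 0 ≤ M')
    {θ : ellTwo} (hθ : θ ∈ Θ)
    (hgood : |R ω - ‖truncate k θ - truncate k (θhat ω)‖ ^ 2| < M' * tauHat σf θhat k n θ ω)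
    {x : ellTwo} (hx : x ∈ confSet Θ σf θhat R zα k n ω) :
    ‖x - θhat ω‖ ≤ 2 * Real.sqrt (zα * Real.sqrt (2 * σbar ^ 4 * k / (n:ℝ) ^ 2))
      + zα * Real.sqrt (4 * σbar ^ 2 / n) + 3 * ‖θ - θhat ω‖
      + 2 * Real.sqrt (M' * Real.sqrt (2 * σbar ^ 4 * k / (n:ℝ) ^ 2))
      + M' * Real.sqrt (4 * σbar ^ 2 / n) + 4 * biasBound Θ k := by
  obtain ⟨hxΘ, hxle⟩ := hx
  have hB : 0 ≤ biasBound Θ k := le_trans (norm_nonneg _) (le_biasBound hBdd hθ)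
  exact real_key (norm_nonneg _) (norm_nonneg _) (norm_nonneg _) (norm_nonneg _)
    (Real.sqrt_nonneg _) (Real.sqrt_nonneg _) hB hz hM'
    (norm_trunc_sub_le k θ (θhat ω)) (norm_trunc_sub_le k x (θhat ω))
    (tauHat_le θhat k n θ ω (hσf θ hθ).1.le (hσf θ hθ).2)
    (tauHat_le θhat k n x ω (hσf x hxΘ).1.le (hσf x hxΘ).2)
    hgood hxle

lemma rquarter_facts (k : ℕ) :
    (0:ℝ) ≤ (k:ℝ) ^ ((1:ℝ)/4) ∧ ((k:ℝ) ^ ((1:ℝ)/4)) ^ (4:ℕ) = (k:ℝ) := by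
  constructor
  · exact Real.rpow_nonneg (Nat.cast_nonneg k) _
  · rw [← Real.rpow_natCast ((k:ℝ) ^ ((1:ℝ)/4)) 4, ← Real.rpow_mul (Nat.cast_nonneg k)]
    norm_num

lemma a_quarter_le {σbar : ℝ} (hσ : 0 < σbar) {k n : ℕ} (hn : 1 ≤ n) :
    Real.sqrt (Real.sqrt (2 * σbar ^ 4 * k / (n:ℝ) ^ 2))
      ≤ Real.sqrt 2 * (σbar * (k:ℝ) ^ ((1:ℝ)/4) / Real.sqrt n) := by
  obtain ⟨hr0, hr4⟩ := rquarter_facts k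
  set r := (k:ℝ) ^ ((1:ℝ)/4)
  have hn0 : (0:ℝ) < n := by exact_mod_cast hn
  have hsn : (0:ℝ) < Real.sqrt n := Real.sqrt_pos.2 hn0
  have hsn2 : Real.sqrt (n:ℝ) ^ 2 = (n:ℝ) := Real.sq_sqrt hn0.le
  have hrhs : (0:ℝ) ≤ Real.sqrt 2 * (σbar * r / Real.sqrt n) := by positivity
  rw [Real.sqrt_le_left hrhs]
  have h2 : (Real.sqrt 2 * (σbar * r / Real.sqrt n)) ^ 2 = 2 * σbar ^ 2 * r ^ 2 / n := by
    rw [mul_pow, div_pow, hsn2, Real.sq_sqrt (by norm_num : (0:ℝ) ≤ 2)]; ring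
  rw [h2, Real.sqrt_le_left (by positivity)]
  have h3 : (2 * σbar ^ 2 * r ^ 2 / (n:ℝ)) ^ 2 = 4 * σbar ^ 4 * (r^2)^2 / (n:ℝ) ^ 2 := by
    field_simp; ring
  rw [h3]
  have h4 : ((r ^ 2) ^ 2 : ℝ) = (k:ℝ) := by rw [← hr4]; ring
  rw [h4]
  have hpos : (0:ℝ) < (n:ℝ)^2 := by positivity
  exact div_le_div_of_nonneg_right
    (by nlinarith [mul_nonneg (pow_nonneg hσ.le 4) (Nat.cast_nonneg k)]) hpos.le

lemma b_quarter_le {σbar : ℝ} (hσ : 0 < σbar) {k n : ℕ} (hn : 1 ≤ n) (hk : 1 ≤ k) :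
    Real.sqrt (4 * σbar ^ 2 / n) ≤ 2 * (σbar * (k:ℝ) ^ ((1:ℝ)/4) / Real.sqrt n) := by
  obtain ⟨hr0, hr4⟩ := rquarter_facts k
  set r := (k:ℝ) ^ ((1:ℝ)/4)
  have hr1 : (1:ℝ) ≤ r := by
    apply Real.one_le_rpow (by exact_mod_cast hk) (by norm_num)
  have hn0 : (0:ℝ) < n := by exact_mod_cast hn
  have hsn : (0:ℝ) < Real.sqrt n := Real.sqrt_pos.2 hn0
  have hsn2 : Real.sqrt (n:ℝ) ^ 2 = (n:ℝ) := Real.sq_sqrt hn0.le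
  rw [Real.sqrt_le_left (by positivity)]
  have h2 : (2 * (σbar * r / Real.sqrt n)) ^ 2 = 4 * σbar ^ 2 * r ^ 2 / n := by
    rw [mul_pow, div_pow, hsn2]; ring
  rw [h2]
  have : 4 * σbar ^ 2 / (n:ℝ) * 1 ≤ 4 * σbar ^ 2 / n * r ^ 2 := by
    apply mul_le_mul_of_nonneg_left (by nlinarith) (by positivity)
  calc 4 * σbar ^ 2 / (n:ℝ) = 4 * σbar ^ 2 / n * 1 := by ring
    _ ≤ 4 * σbar ^ 2 / n * r ^ 2 := this
    _ = 4 * σbar ^ 2 * r ^ 2 / n := by ring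


lemma aux_coverage
    (Θ : Set ellTwo) (hBdd : ∀ k, BddAbove (Set.range fun θ : Θ => ‖(θ : ellTwo) - truncate k θ‖))
    (Ωn : ℕ → Type*) [∀ n, MeasurableSpace (Ωn n)]
    (P : (n : ℕ) → ellTwo → Measure (Ωn n))
    (hprob : ∀ n, ∀ θ ∈ Θ, IsProbabilityMeasure (P n θ))
    (θhat : (n : ℕ) → Ωn n → ellTwo) (hθhat : ∀ n ω, θhat n ω ∈ Θ)
    (R : (k : ℕ) → (n : ℕ) → Ωn n → ℝ)
    (σbar : ℝ) (hσbar : 0 < σbar) (σf : ellTwo → ℝ)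
    (hσf : ∀ θ ∈ Θ, 0 < σf θ ∧ σf θ ≤ σbar)
    (α : ℝ) (hα : α ∈ Set.Ioo (0 : ℝ) 1) (zα : ℝ) (hz : 0 < zα)
    (h27 : ∀ kseq : ℕ → ℕ, Tendsto kseq atTop atTop →
      ∀ δ > (0 : ℝ), ∃ N : ℕ, ∀ n ≥ N, ∀ θ ∈ Θ,
        ((P n θ) {ω | R (kseq n) n ω
              - ‖truncate (kseq n) θ - truncate (kseq n) (θhat n ω)‖ ^ 2
            ≤ -(zα * tauHat σf (θhat n) (kseq n) n θ ω)}).toReal ≤ α + δ) :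
    ∀ kseq : ℕ → ℕ, Tendsto kseq atTop atTop →
      (∀ δ > (0 : ℝ), ∃ N : ℕ, ∀ n ≥ N, ∀ θ ∈ Θ,
        1 - α - δ ≤ ((P n θ) {ω |
          θ ∈ confSet Θ σf (θhat n) (R (kseq n) n) zα (kseq n) n ω}).toReal) := by
  intro kseq hkseq δ hδ
  obtain ⟨N, hN⟩ := h27 kseq hkseq δ hδ
  refine ⟨N, fun n hn θ hθ => ?_⟩
  haveI := hprob n θ hθ
  set μ := P n θ with hμ
  set A := {ω | θ ∈ confSet Θ σf (θhat n) (R (kseq n) n) zα (kseq n) n ω} with hA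
  set Bad := {ω | R (kseq n) n ω
      - ‖truncate (kseq n) θ - truncate (kseq n) (θhat n ω)‖ ^ 2
      ≤ -(zα * tauHat σf (θhat n) (kseq n) n θ ω)} with hBad
  have hsub : Aᶜ ⊆ Bad := by
    intro ω hω
    by_contra hbad
    exact hω (mem_confSet_of (hBdd (kseq n)) hθ (hθhat n ω) hbad)
  have h2 : (1 : ℝ≥0∞) ≤ μ A + μ Bad := by
    calc (1 : ℝ≥0∞) = μ Set.univ := measure_univ.symm
      _ = μ (A ∪ Aᶜ) := by rw [Set.union_compl_self]
      _ ≤ μ A + μ Aᶜ := measure_union_le _ _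
      _ ≤ μ A + μ Bad := add_le_add_right (measure_mono hsub) _
  have hA_ne : μ A ≠ ⊤ := measure_ne_top μ A
  have hBad_ne : μ Bad ≠ ⊤ := measure_ne_top μ Bad
  have h3 : (1:ℝ) ≤ (μ A).toReal + (μ Bad).toReal := by
    calc (1:ℝ) = (1:ℝ≥0∞).toReal := by simp
      _ ≤ (μ A + μ Bad).toReal :=
        ENNReal.toReal_mono (ENNReal.add_ne_top.2 ⟨hA_ne, hBad_ne⟩) h2
      _ = (μ A).toReal + (μ Bad).toReal := ENNReal.toReal_add hA_ne hBad_ne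
  have h4 := hN n hn θ hθ
  rw [← hμ] at h4
  linarith

set_option maxHeartbeats 2000000 in
lemma aux_diam
    (Θ : Set ellTwo) (hBdd : ∀ k, BddAbove (Set.range fun θ : Θ => ‖(θ : ellTwo) - truncate k θ‖))
    (Ωn : ℕ → Type*) [∀ n, MeasurableSpace (Ωn n)]
    (P : (n : ℕ) → ellTwo → Measure (Ωn n))
    (hprob : ∀ n, ∀ θ ∈ Θ, IsProbabilityMeasure (P n θ))
    (θhat : (n : ℕ) → Ωn n → ellTwo) (hθhat : ∀ n ω, θhat n ω ∈ Θ)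
    (R : (k : ℕ) → (n : ℕ) → Ωn n → ℝ)
    (σbar : ℝ) (hσbar : 0 < σbar) (σf : ellTwo → ℝ)
    (hσf : ∀ θ ∈ Θ, 0 < σf θ ∧ σf θ ≤ σbar)
    (α : ℝ) (hα : α ∈ Set.Ioo (0 : ℝ) 1) (zα : ℝ) (hz : 0 < zα)
    (h28 : ∀ kseq : ℕ → ℕ, Tendsto kseq atTop atTop →
      ∀ Mseq : ℕ → ℝ, Tendsto Mseq atTop atTop →
      ∀ δ > (0 : ℝ), ∃ N : ℕ, ∀ n ≥ N, ∀ θ ∈ Θ,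
        ((P n θ) {ω | Mseq n * tauHat σf (θhat n) (kseq n) n θ ω
            ≤ |R (kseq n) n ω
              - ‖truncate (kseq n) θ - truncate (kseq n) (θhat n ω)‖ ^ 2|}).toReal ≤ δ) :
    ∀ kseq : ℕ → ℕ, Tendsto kseq atTop atTop →
      (∀ Mseq : ℕ → ℝ, Tendsto Mseq atTop atTop →
        ∀ δ > (0 : ℝ), ∃ N : ℕ, ∀ n ≥ N, ∀ θ ∈ Θ,
          ((P n θ) {ω | ENNReal.ofReal
              (Mseq n * (σbar * (kseq n : ℝ) ^ ((1 : ℝ)/4) / Real.sqrt n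
                + biasBound Θ (kseq n) + ‖θ - θhat n ω‖))
            ≤ EMetric.diam (confSet Θ σf (θhat n) (R (kseq n) n) zα (kseq n) n ω)}).toReal
          ≤ δ) := by
  intro kseq hkseq Mseq hM δ hδ
  set M' : ℕ → ℝ := fun m => Real.sqrt (1 + |Mseq m|) with hM'def
  have hM'0 : ∀ m, 0 ≤ M' m := fun m => Real.sqrt_nonneg _
  have hM'tend : Tendsto M' atTop atTop :=
    real_sqrt_tendsto.comp (tendsto_atTop_add_const_left atTop 1
      (tendsto_abs_atTop_atTop.comp hM))
  obtain ⟨N2, hN2⟩ := h28 kseq hkseq M' hM'tend δ hδ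
  set c₀ : ℝ := 6 * Real.sqrt zα + 4 * zα + 14 with hc₀def
  have hc₀ : 0 ≤ c₀ := by positivity
  set X : ℝ := (c₀ + 16) ^ 2 + 1 with hXdef
  obtain ⟨N3, hN3⟩ := eventually_atTop.1 (hM.eventually_ge_atTop X)
  obtain ⟨N1, hN1⟩ := eventually_atTop.1 (hkseq.eventually_ge_atTop 1)
  refine ⟨max (max N1 N2) (max N3 1), fun n hn θ hθ => ?_⟩
  haveI := hprob n θ hθ
  have hn1 : 1 ≤ n := le_trans (le_max_right N3 1) (le_trans (le_max_right _ _) hn)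
  have hkn : 1 ≤ kseq n := hN1 n (le_trans (le_max_left N1 N2) (le_trans (le_max_left _ _) hn))
  have hMX : X ≤ Mseq n := hN3 n (le_trans (le_max_left N3 1) (le_trans (le_max_right _ _) hn))
  have hnN2 : N2 ≤ n := le_trans (le_max_right N1 N2) (le_trans (le_max_left _ _) hn)
  set k := kseq n with hkdef
  -- basic positivity facts
  set D₀ : ℝ := σbar * (k:ℝ) ^ ((1:ℝ)/4) / Real.sqrt n with hD₀def
  have hr1 : (1:ℝ) ≤ (k:ℝ) ^ ((1:ℝ)/4) :=
    Real.one_le_rpow (by exact_mod_cast hkn) (by norm_num)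
  have hsn : (0:ℝ) < Real.sqrt n := Real.sqrt_pos.2 (by exact_mod_cast hn1)
  have hD₀ : 0 < D₀ := by rw [hD₀def]; positivity
  have hs2 : Real.sqrt 2 ≤ 1.5 := (Real.sqrt_le_left (by norm_num)).2 (by norm_num)
  have hB : 0 ≤ biasBound Θ k := le_trans (norm_nonneg _) (le_biasBound (hBdd k) hθ)
  -- Mseq facts
  have hM1 : (1:ℝ) ≤ Mseq n := by nlinarith
  set s : ℝ := Real.sqrt (Mseq n) with hsdef
  have hs1 : (1:ℝ) ≤ s := by rw [hsdef]; exact Real.one_le_sqrt.2 hM1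
  have hss : s * s = Mseq n := Real.mul_self_sqrt (by linarith)
  have hsc : c₀ + 16 ≤ s := by
    calc c₀ + 16 = Real.sqrt ((c₀ + 16) ^ 2) := (Real.sqrt_sq (by linarith)).symm
      _ ≤ s := Real.sqrt_le_sqrt (by rw [hXdef] at hMX; linarith)
  have hM'le : M' n ≤ 1.5 * s := by
    rw [hM'def]
    have habs : |Mseq n| = Mseq n := abs_of_nonneg (by linarith)
    calc Real.sqrt (1 + |Mseq n|) ≤ Real.sqrt (2 * Mseq n) := by
          apply Real.sqrt_le_sqrt; rw [habs]; linarith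
      _ = Real.sqrt 2 * s := by rw [Real.sqrt_mul (by norm_num), hsdef]
      _ ≤ 1.5 * s := mul_le_mul_of_nonneg_right hs2 (by linarith)
  have h1M' : (1:ℝ) ≤ M' n := by
    rw [hM'def]; exact Real.one_le_sqrt.2 (by linarith [abs_nonneg (Mseq n)])
  have hsM' : Real.sqrt (M' n) ≤ M' n :=
    (Real.sqrt_le_left (by linarith)).2 (by nlinarith)
  have hM8 : (8:ℝ) ≤ Mseq n := by rw [hXdef] at hMX; nlinarith
  -- reduce to the h28 event
  refine le_trans (ENNReal.toReal_mono (measure_ne_top _ _) (measure_mono ?_))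
    (hN2 n hnN2 θ hθ)
  intro ω hω
  simp only [Set.mem_setOf_eq] at hω ⊢
  by_contra hbad
  push_neg at hbad
  set v : ℝ := ‖θ - θhat n ω‖ with hvdef
  have hv : 0 ≤ v := norm_nonneg _
  set a : ℝ := Real.sqrt (2 * σbar ^ 4 * k / (n:ℝ) ^ 2) with hadef
  set b : ℝ := Real.sqrt (4 * σbar ^ 2 / n) with hbdef
  have ha : 0 ≤ a := Real.sqrt_nonneg _
  have hb : 0 ≤ b := Real.sqrt_nonneg _
  set T : ℝ := 2 * Real.sqrt (zα * a) + zα * b + 3 * v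
      + 2 * Real.sqrt (M' n * a) + M' n * b + 4 * biasBound Θ k with hTdef
  have hmem : ∀ x ∈ confSet Θ σf (θhat n) (R k n) zα k n ω, ‖x - θhat n ω‖ ≤ T :=
    fun x hx => member_bound (hBdd k) hσf hz (hM'0 n) hθ hbad hx
  have hT0 : 0 ≤ T := by
    rw [hTdef]
    have := Real.sqrt_nonneg (zα * a)
    have := Real.sqrt_nonneg (M' n * a)
    have := mul_nonneg hz.le hb
    have := mul_nonneg (hM'0 n) hb
    linarith
  have hdiam : EMetric.diam (confSet Θ σf (θhat n) (R k n) zα k n ω)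
      ≤ ENNReal.ofReal (2 * T) := by
    apply EMetric.diam_le
    intro x hx y hy
    rw [edist_dist]
    apply ENNReal.ofReal_le_ofReal
    have e : x - y = (x - θhat n ω) - (y - θhat n ω) := by abel
    calc dist x y = ‖x - y‖ := dist_eq_norm x y
      _ = ‖(x - θhat n ω) - (y - θhat n ω)‖ := by rw [← e]
      _ ≤ ‖x - θhat n ω‖ + ‖y - θhat n ω‖ := norm_sub_le _ _
      _ ≤ 2 * T := by linarith [hmem x hx, hmem y hy]
  -- the deterministic strict bound 2T < Mₙ (D₀ + B + v)
  have q0 : Real.sqrt a ≤ 1.5 * D₀ := by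
    refine le_trans (a_quarter_le hσbar hn1) ?_
    have := mul_le_mul_of_nonneg_right hs2 hD₀.le
    linarith
  have q1 : Real.sqrt (zα * a) ≤ 1.5 * (Real.sqrt zα * D₀) := by
    rw [Real.sqrt_mul hz.le]
    calc Real.sqrt zα * Real.sqrt a ≤ Real.sqrt zα * (1.5 * D₀) :=
          mul_le_mul_of_nonneg_left q0 (Real.sqrt_nonneg _)
      _ = 1.5 * (Real.sqrt zα * D₀) := by ring
  have q2 : b ≤ 2 * D₀ := b_quarter_le hσbar hn1 hkn
  have q3 : Real.sqrt (M' n * a) ≤ 1.5 * (M' n * D₀) := by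
    rw [Real.sqrt_mul (hM'0 n)]
    calc Real.sqrt (M' n) * Real.sqrt a ≤ M' n * (1.5 * D₀) :=
          mul_le_mul hsM' q0 (Real.sqrt_nonneg _) (hM'0 n)
      _ = 1.5 * (M' n * D₀) := by ring
  have q2' : zα * b ≤ zα * (2 * D₀) := mul_le_mul_of_nonneg_left q2 hz.le
  have q4' : M' n * b ≤ M' n * (2 * D₀) := mul_le_mul_of_nonneg_left q2 (hM'0 n)
  have q5 : M' n * D₀ ≤ 1.5 * s * D₀ := mul_le_mul_of_nonneg_right hM'le hD₀.le
  have hcoef : 6 * Real.sqrt zα + 4 * zα + 15 * s < Mseq n := by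
    have w1 : (c₀ + 16) * s ≤ s * s := mul_le_mul_of_nonneg_right hsc (by linarith)
    have w2 : c₀ * 1 ≤ c₀ * s := mul_le_mul_of_nonneg_left hs1 hc₀
    linarith [hss, hs1, hc₀def]
  have m1 : (6 * Real.sqrt zα + 4 * zα + 15 * s) * D₀ < Mseq n * D₀ :=
    mul_lt_mul_of_pos_right hcoef hD₀
  have m2 : 6 * v ≤ Mseq n * v := mul_le_mul_of_nonneg_right (by linarith) hv
  have m3 : 8 * biasBound Θ k ≤ Mseq n * biasBound Θ k :=
    mul_le_mul_of_nonneg_right (by linarith) hB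
  have hlt : 2 * T < Mseq n * (D₀ + biasBound Θ k + v) := by
    linarith [hTdef, q1, q2', q3, q4', q5, m1, m2, m3]
  -- contradiction
  have hle : Mseq n * (D₀ + biasBound Θ k + v) ≤ 2 * T :=
    (ENNReal.ofReal_le_ofReal_iff (by linarith)).1 (le_trans hω hdiam)
  linarith

/-- Proposition 2.1: assuming the deviation bounds (2.7) and (2.8) for
the estimators `R_{k,n}` of `‖Π_kθ - Π_kθ̂⁽ⁿ⁾‖²` (stated for every sequence `kₙ → ∞`, with
limsup/sup and convergence-to-zero expressed in ε-N form), the confidence sets `Ĉₙ` are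
honest `(1-α)`-confidence sets over `Θ`, and their diameter satisfies
`sup_{θ∈Θ} P_θ(diam(Ĉₙ) ≥ Mₙ[σ̄kₙ^{1/4}/√n + B_{kₙ} + ‖θ - θ̂⁽ⁿ⁾‖]) → 0`
for every `Mₙ → ∞`. -/
theorem adaptive_ci_main_proposition
    (Θ : Set ellTwo) (hBdd : ∀ k, BddAbove (Set.range fun θ : Θ => ‖(θ : ellTwo) - truncate k θ‖))
    (Ωn : ℕ → Type*) [∀ n, MeasurableSpace (Ωn n)]
    (P : (n : ℕ) → ellTwo → Measure (Ωn n))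
    (hprob : ∀ n, ∀ θ ∈ Θ, IsProbabilityMeasure (P n θ))
    (θhat : (n : ℕ) → Ωn n → ellTwo) (hθhat : ∀ n ω, θhat n ω ∈ Θ)
    (R : (k : ℕ) → (n : ℕ) → Ωn n → ℝ)
    (σbar : ℝ) (hσbar : 0 < σbar) (σf : ellTwo → ℝ)
    (hσf : ∀ θ ∈ Θ, 0 < σf θ ∧ σf θ ≤ σbar)
    (α : ℝ) (hα : α ∈ Set.Ioo (0 : ℝ) 1) (zα : ℝ) (hz : 0 < zα)
    (h27 : ∀ kseq : ℕ → ℕ, Tendsto kseq atTop atTop →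
      ∀ δ > (0 : ℝ), ∃ N : ℕ, ∀ n ≥ N, ∀ θ ∈ Θ,
        ((P n θ) {ω | R (kseq n) n ω
              - ‖truncate (kseq n) θ - truncate (kseq n) (θhat n ω)‖ ^ 2
            ≤ -(zα * tauHat σf (θhat n) (kseq n) n θ ω)}).toReal ≤ α + δ)
    (h28 : ∀ kseq : ℕ → ℕ, Tendsto kseq atTop atTop →
      ∀ Mseq : ℕ → ℝ, Tendsto Mseq atTop atTop →
      ∀ δ > (0 : ℝ), ∃ N : ℕ, ∀ n ≥ N, ∀ θ ∈ Θ,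
        ((P n θ) {ω | Mseq n * tauHat σf (θhat n) (kseq n) n θ ω
            ≤ |R (kseq n) n ω
              - ‖truncate (kseq n) θ - truncate (kseq n) (θhat n ω)‖ ^ 2|}).toReal ≤ δ) :
    ∀ kseq : ℕ → ℕ, Tendsto kseq atTop atTop →
      (∀ δ > (0 : ℝ), ∃ N : ℕ, ∀ n ≥ N, ∀ θ ∈ Θ,
        1 - α - δ ≤ ((P n θ) {ω |
          θ ∈ confSet Θ σf (θhat n) (R (kseq n) n) zα (kseq n) n ω}).toReal)
      ∧ (∀ Mseq : ℕ → ℝ, Tendsto Mseq atTop atTop →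
        ∀ δ > (0 : ℝ), ∃ N : ℕ, ∀ n ≥ N, ∀ θ ∈ Θ,
          ((P n θ) {ω | ENNReal.ofReal
              (Mseq n * (σbar * (kseq n : ℝ) ^ ((1 : ℝ)/4) / Real.sqrt n
                + biasBound Θ (kseq n) + ‖θ - θhat n ω‖))
            ≤ EMetric.diam (confSet Θ σf (θhat n) (R (kseq n) n) zα (kseq n) n ω)}).toReal
          ≤ δ) := by
  intro kseq hkseq
  exact ⟨aux_coverage Θ hBdd Ωn P hprob θhat hθhat R σbar hσbar σf hσf α hα zα hz h27
      kseq hkseq,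
    aux_diam Θ hBdd Ωn P hprob θhat hθhat R σbar hσbar σf hσf α hα zα hz h28 kseq hkseq⟩
end

section
/- Fix 0 < α < β < 1, subsets Θ_{n,1} ⊆ Θ₁ ⊆ Θ and positive numbers εₙ, and set Θ_{n,0} = { θ ∈ Θ : d(θ, Θ_{n,1}) > εₙ }. Assume that there exists no sequence of tests φₙ satisfying limsup_n sup_{θ ∈ Θ_{n,0}} P_θ^{(n)}φₙ ≤ α and limsup_n sup_{θ ∈ Θ_{n,1}} P_θ^{(n)}(1 − φₙ) ≤ β. Then every sequence of confidence sets Ĉₙ for which the events {ω : θ ∈ Ĉₙ(ω)} (for each θ ∈ Θ), {ω : dist(Ĉₙ(ω), Θ_{n,0}) > 0} and {ω : diam(Ĉₙ(ω)) ≥ εₙ} are measurable and which is honest, i.e. liminf_n inf_{θ∈Θ} P_θ^{(n)}(θ ∈ Ĉₙ) ≥ 1 − α, satisfies limsup_n sup_{θ ∈ Θ₁} P_θ^{(n)}( diam(Ĉₙ) ≥ εₙ ) > β − α. -/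
open MeasureTheory Filter

/-- The set of parameters in `Θ` at distance more than `ε` from `S`. -/
noncomputable def farFrom {α : Type*} [MetricSpace α] (Θ S : Set α) (ε : ℝ) : Set α :=
  {θ ∈ Θ | ENNReal.ofReal ε < EMetric.infEdist θ S}

/-- The (infimum) distance between two sets, valued in `[0,∞]`. -/
noncomputable def setInfEdist {α : Type*} [MetricSpace α] (A B : Set α) : ENNReal :=
  sInf ((fun c => EMetric.infEdist c B) '' A)

section helpers

variable {α : Type*} {S : Set α} {v : α → ℝ} {c : ℝ}

lemma rSup_le (hc : 0 ≤ c) (h : ∀ θ ∈ S, v θ ≤ c) : sSup (v '' S) ≤ c :=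
  Real.sSup_le (by rintro _ ⟨θ, hθ, rfl⟩; exact h θ hθ) hc

lemma rSup_nonneg (h : ∀ θ ∈ S, 0 ≤ v θ) : 0 ≤ sSup (v '' S) :=
  Real.sSup_nonneg (by rintro _ ⟨θ, hθ, rfl⟩; exact h θ hθ)

lemma le_rSup (h1 : ∀ θ ∈ S, v θ ≤ 1) {θ : α} (hθ : θ ∈ S) : v θ ≤ sSup (v '' S) :=
  le_csSup ⟨1, by rintro _ ⟨θ', hθ', rfl⟩; exact h1 θ' hθ'⟩ ⟨θ, hθ, rfl⟩

lemma rInf_le (h0 : ∀ θ, 0 ≤ v θ) {θ : α} (hθ : θ ∈ S) : sInf (v '' S) ≤ v θ :=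
  csInf_le ⟨0, by rintro _ ⟨θ', _, rfl⟩; exact h0 θ'⟩ ⟨θ, hθ, rfl⟩

lemma rInf_le_one (h0 : ∀ θ, 0 ≤ v θ) (h1 : ∀ θ ∈ S, v θ ≤ 1) : sInf (v '' S) ≤ 1 := by
  rcases S.eq_empty_or_nonempty with h | ⟨θ₀, hθ₀⟩
  · rw [h, Set.image_empty, Real.sInf_empty]; exact zero_le_one
  · exact (rInf_le h0 hθ₀).trans (h1 θ₀ hθ₀)

end helpers

/-- Lemma 6.1: if for `0 < a < b < 1` there is no sequence of tests `φₙ`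
with `limsupₙ sup_{θ∈Θ_{n,0}} P_θ^{(n)}φₙ ≤ a` and `limsupₙ sup_{θ∈Θ_{n,1}} P_θ^{(n)}(1-φₙ) ≤ b`,
where `Θ_{n,0} = {θ ∈ Θ : d(θ,Θ_{n,1}) > εₙ}`, then every honest sequence of confidence sets
`Ĉₙ` (i.e. `liminfₙ inf_{θ∈Θ} P_θ^{(n)}(θ ∈ Ĉₙ) ≥ 1 - a`) satisfies
`limsupₙ sup_{θ∈Θ₁} P_θ^{(n)}(diam Ĉₙ ≥ εₙ) > b - a`. -/
theorem adaptive_ci_diameter_testing_lower_bound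
    {α : Type*} [MetricSpace α]
    (Θ Θ₁ : Set α) (hΘ₁ : Θ₁ ⊆ Θ)
    (Θn1 : ℕ → Set α) (hΘn1 : ∀ n, Θn1 n ⊆ Θ₁)
    (Ω : ℕ → Type*) [∀ n, MeasurableSpace (Ω n)]
    (P : (n : ℕ) → α → Measure (Ω n))
    (hprob : ∀ n, ∀ θ ∈ Θ, IsProbabilityMeasure (P n θ))
    (a b : ℝ) (ha : 0 < a) (hab : a < b) (hb : b < 1)
    (εseq : ℕ → ℝ) (hε : ∀ n, 0 < εseq n)
    (hNoTest : ¬ ∃ φ : (n : ℕ) → Ω n → ℝ,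
      (∀ n, Measurable (φ n)) ∧ (∀ n ω, φ n ω ∈ Set.Icc (0 : ℝ) 1) ∧
      limsup (fun n => sSup ((fun θ => ∫ ω, φ n ω ∂(P n θ)) '' (farFrom Θ (Θn1 n) (εseq n)))) atTop ≤ a ∧
      limsup (fun n => sSup ((fun θ => ∫ ω, (1 - φ n ω) ∂(P n θ)) '' (Θn1 n))) atTop ≤ b)
    (C : (n : ℕ) → Ω n → Set α) (hCsub : ∀ n ω, C n ω ⊆ Θ)
    (hmeas_cover : ∀ n, ∀ θ ∈ Θ, MeasurableSet {ω | θ ∈ C n ω})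
    (hmeas_dist : ∀ n, MeasurableSet
      {ω | 0 < setInfEdist (C n ω) (farFrom Θ (Θn1 n) (εseq n))})
    (hmeas_diam : ∀ n, MeasurableSet {ω | ENNReal.ofReal (εseq n) ≤ EMetric.diam (C n ω)})
    (honest : 1 - a ≤
      liminf (fun n => sInf ((fun θ => ((P n θ) {ω | θ ∈ C n ω}).toReal) '' Θ)) atTop) :
    b - a < limsup (fun n =>
      sSup ((fun θ => ((P n θ) {ω | ENNReal.ofReal (εseq n) ≤ EMetric.diam (C n ω)}).toReal) '' Θ₁))
      atTop := by
  by_contra hcon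
  rw [not_lt] at hcon
  apply hNoTest
  -- notation
  set Θn0 : ℕ → Set α := fun n => farFrom Θ (Θn1 n) (εseq n) with hΘn0def
  set A : (n : ℕ) → Set (Ω n) := fun n => {ω | 0 < setInfEdist (C n ω) (Θn0 n)} with hAdef
  set p : ℕ → α → ℝ := fun n θ => ((P n θ) {ω | θ ∈ C n ω}).toReal with hpdef
  set q : ℕ → α → ℝ := fun n θ =>
    ((P n θ) {ω | ENNReal.ofReal (εseq n) ≤ EMetric.diam (C n ω)}).toReal with hqdef
  set f : ℕ → ℝ := fun n => sInf ((fun θ => p n θ) '' Θ) with hfdef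
  set g : ℕ → ℝ := fun n => sSup ((fun θ => q n θ) '' Θ₁) with hgdef
  -- the test
  refine ⟨fun n ω => (A n).indicator (fun _ => (1 : ℝ)) ω,
    fun n => measurable_const.indicator (hmeas_dist n), ?_, ?_, ?_⟩
  · intro n ω
    by_cases hω : ω ∈ A n <;> simp [Set.indicator_apply, hω]
  -- basic facts
  all_goals {
  have hp0 : ∀ n θ, 0 ≤ p n θ := fun n θ => ENNReal.toReal_nonneg
  have hq0 : ∀ n θ, 0 ≤ q n θ := fun n θ => ENNReal.toReal_nonneg
  have hp1 : ∀ n, ∀ θ ∈ Θ, p n θ ≤ 1 := by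
    intro n θ hθ
    haveI := hprob n θ hθ
    exact ENNReal.toReal_le_of_le_ofReal zero_le_one (by simpa using prob_le_one)
  have hq1 : ∀ n, ∀ θ ∈ Θ, q n θ ≤ 1 := by
    intro n θ hθ
    haveI := hprob n θ hθ
    exact ENNReal.toReal_le_of_le_ofReal zero_le_one (by simpa using prob_le_one)
  have hf1 : ∀ n, f n ≤ 1 := fun n => rInf_le_one (hp0 n) (hp1 n)
  have hg0 : ∀ n, 0 ≤ g n := fun n => rSup_nonneg (fun θ _ => hq0 n θ)
  have hg1 : ∀ n, g n ≤ 1 := fun n => rSup_le zero_le_one (fun θ hθ => hq1 n θ (hΘ₁ hθ))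
  -- integral computations, for θ ∈ Θ
  have hint : ∀ n, ∀ θ ∈ Θ,
      (∫ ω, (A n).indicator (fun _ => (1:ℝ)) ω ∂(P n θ)) = ((P n θ) (A n)).toReal := by
    intro n θ hθ
    exact integral_indicator_one (hmeas_dist n)
  have hint1 : ∀ n, ∀ θ ∈ Θ,
      (∫ ω, (1 - (A n).indicator (fun _ => (1:ℝ)) ω) ∂(P n θ))
        = 1 - ((P n θ) (A n)).toReal := by
    intro n θ hθ
    haveI := hprob n θ hθ
    have hInt : Integrable ((A n).indicator (fun _ => (1:ℝ))) (P n θ) :=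
      (integrable_const (1:ℝ)).indicator (hmeas_dist n)
    rw [integral_sub (integrable_const 1) hInt, integral_const, hint n θ hθ]
    simp
  -- Type I pointwise bound
  have hB0 : ∀ n, ∀ θ ∈ Θn0 n, ((P n θ) (A n)).toReal ≤ 1 - p n θ := by
    intro n θ hθ
    have hθΘ : θ ∈ Θ := hθ.1
    haveI := hprob n θ hθΘ
    have hsub : A n ⊆ {ω | θ ∈ C n ω}ᶜ := by
      intro ω hω
      intro hmem
      have h1 : setInfEdist (C n ω) (Θn0 n) ≤ EMetric.infEdist θ (Θn0 n) :=
        by rw [setInfEdist, sInf_image]; exact iInf₂_le θ hmem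
      rw [show EMetric.infEdist θ (Θn0 n) = 0 from EMetric.infEdist_zero_of_mem hθ] at h1
      exact absurd (lt_of_lt_of_le hω h1) (lt_irrefl 0)
    calc ((P n θ) (A n)).toReal
        ≤ ((P n θ) {ω | θ ∈ C n ω}ᶜ).toReal := by
          exact ENNReal.toReal_mono (measure_ne_top _ _) (measure_mono hsub)
      _ = 1 - p n θ := by
          rw [prob_compl_eq_one_sub (hmeas_cover n θ hθΘ),
            ENNReal.toReal_sub_of_le prob_le_one ENNReal.one_ne_top, ENNReal.toReal_one]
  -- Type II pointwise bound
  have hB1 : ∀ n, ∀ θ ∈ Θn1 n, 1 - ((P n θ) (A n)).toReal ≤ (1 - p n θ) + q n θ := by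
    intro n θ hθ
    have hθΘ : θ ∈ Θ := hΘ₁ (hΘn1 n hθ)
    haveI := hprob n θ hθΘ
    have hsub : (A n)ᶜ ⊆ {ω | θ ∈ C n ω}ᶜ ∪
        {ω | ENNReal.ofReal (εseq n) ≤ EMetric.diam (C n ω)} := by
      intro ω hω
      by_cases hmem : θ ∈ C n ω
      · right
        have hz : setInfEdist (C n ω) (Θn0 n) = 0 := by
          have := hω
          simp only [hAdef, Set.mem_compl_iff, Set.mem_setOf_eq, not_lt, nonpos_iff_eq_zero] at this
          exact this
        show ENNReal.ofReal (εseq n) ≤ EMetric.diam (C n ω)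
        apply ENNReal.le_of_forall_pos_le_add
        intro δ hδ _
        refine le_of_lt ?_
        have hlt : setInfEdist (C n ω) (Θn0 n) < (δ : ENNReal) := by
          rw [hz]; exact ENNReal.coe_pos.mpr hδ
        rw [setInfEdist, sInf_image] at hlt
        simp only [iInf_lt_iff] at hlt
        obtain ⟨c, hcC, hcd⟩ := hlt
        obtain ⟨s, hsΘ0, hcs⟩ := EMetric.infEdist_lt_iff.mp hcd
        have h1 : ENNReal.ofReal (εseq n) < EMetric.infEdist s (Θn1 n) := hsΘ0.2
        have h2 : EMetric.infEdist s (Θn1 n) ≤ edist s θ :=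
          EMetric.infEdist_le_edist_of_mem hθ
        have h3 : edist s θ ≤ edist s c + edist c θ := edist_triangle _ _ _
        have h4 : edist c θ ≤ EMetric.diam (C n ω) := EMetric.edist_le_diam_of_mem hcC hmem
        have h5 : edist s c < (δ : ENNReal) := by rwa [edist_comm]
        calc ENNReal.ofReal (εseq n) < edist s θ := lt_of_lt_of_le h1 h2
          _ ≤ edist s c + edist c θ := h3
          _ ≤ (δ : ENNReal) + EMetric.diam (C n ω) := add_le_add h5.le h4
          _ = EMetric.diam (C n ω) + δ := add_comm _ _
      · left; exact hmem
    have hmeasU : (P n θ) ({ω | θ ∈ C n ω}ᶜ ∪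
        {ω | ENNReal.ofReal (εseq n) ≤ EMetric.diam (C n ω)}) ≤
        (P n θ) {ω | θ ∈ C n ω}ᶜ +
        (P n θ) {ω | ENNReal.ofReal (εseq n) ≤ EMetric.diam (C n ω)} := measure_union_le _ _
    have hcompl : ((P n θ) (A n)ᶜ).toReal = 1 - ((P n θ) (A n)).toReal := by
      rw [prob_compl_eq_one_sub (hmeas_dist n),
        ENNReal.toReal_sub_of_le prob_le_one ENNReal.one_ne_top, ENNReal.toReal_one]
    have hcompl2 : ((P n θ) {ω | θ ∈ C n ω}ᶜ).toReal = 1 - p n θ := by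
      rw [prob_compl_eq_one_sub (hmeas_cover n θ hθΘ),
        ENNReal.toReal_sub_of_le prob_le_one ENNReal.one_ne_top, ENNReal.toReal_one]
    calc 1 - ((P n θ) (A n)).toReal = ((P n θ) (A n)ᶜ).toReal := hcompl.symm
      _ ≤ (((P n θ) {ω | θ ∈ C n ω}ᶜ) +
          ((P n θ) {ω | ENNReal.ofReal (εseq n) ≤ EMetric.diam (C n ω)})).toReal := by
          exact ENNReal.toReal_mono
            (by exact ENNReal.add_ne_top.mpr ⟨measure_ne_top _ _, measure_ne_top _ _⟩)
            ((measure_mono hsub).trans hmeasU)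
      _ = (1 - p n θ) + q n θ := by
          rw [ENNReal.toReal_add (measure_ne_top _ _) (measure_ne_top _ _), hcompl2]
  -- boundedness facts for limsup manipulation
  have hfbdd : atTop.IsBoundedUnder (· ≥ ·) f :=
    isBoundedUnder_of ⟨0, fun n => Real.sInf_nonneg (by
      rintro _ ⟨θ, _, rfl⟩; exact hp0 n θ)⟩
  have hgbdd : atTop.IsBoundedUnder (· ≤ ·) g :=
    isBoundedUnder_of ⟨1, fun n => hg1 n⟩
  first
  | -- Goal: limsup of type I errors ≤ a
    ( refine le_of_forall_gt_imp_ge_of_dense ?_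
      intro y hy
      have h1y : 1 - y < liminf f atTop := by
        have : 1 - y < 1 - a := by linarith
        exact lt_of_lt_of_le this honest
      have hev : ∀ᶠ n in atTop, 1 - y < f n := eventually_lt_of_lt_liminf h1y hfbdd
      have hev2 : ∀ᶠ n in atTop,
          sSup ((fun θ => ∫ ω, (A n).indicator (fun _ => (1:ℝ)) ω ∂(P n θ)) '' Θn0 n) ≤ y := by
        filter_upwards [hev] with n hn
        have hy0 : (0:ℝ) ≤ y := le_trans ha.le hy.le
        refine rSup_le hy0 ?_
        intro θ hθ
        have hθΘ : θ ∈ Θ := hθ.1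
        rw [hint n θ hθΘ]
        have h2 : f n ≤ p n θ := rInf_le (hp0 n) hθΘ
        have := hB0 n θ hθ
        linarith
      exact limsup_le_of_le
        (isCoboundedUnder_le_of_eventually_le atTop
          (x := 0) (Eventually.of_forall fun n => rSup_nonneg fun θ hθ => by
            rw [hint n θ hθ.1]; exact ENNReal.toReal_nonneg)) hev2 )
  | -- Goal: limsup of type II errors ≤ b
    ( refine le_of_forall_gt_imp_ge_of_dense ?_
      intro y hy
      set η := y - b with hηdef
      have hη : 0 < η := by simp [hηdef]; linarith
      have h1y : 1 - a - η/2 < liminf f atTop :=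
        lt_of_lt_of_le (by linarith) honest
      have hevf : ∀ᶠ n in atTop, 1 - a - η/2 < f n := eventually_lt_of_lt_liminf h1y hfbdd
      have hevg : ∀ᶠ n in atTop, g n < b - a + η/2 :=
        eventually_lt_of_limsup_lt (lt_of_le_of_lt hcon (by linarith)) hgbdd
      have hev2 : ∀ᶠ n in atTop,
          sSup ((fun θ => ∫ ω, (1 - (A n).indicator (fun _ => (1:ℝ)) ω) ∂(P n θ)) '' Θn1 n) ≤ y := by
        filter_upwards [hevf, hevg] with n hnf hng
        have hy0 : (0:ℝ) ≤ y := by linarith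
        refine rSup_le hy0 ?_
        intro θ hθ
        have hθΘ : θ ∈ Θ := hΘ₁ (hΘn1 n hθ)
        rw [hint1 n θ hθΘ]
        have h2 : f n ≤ p n θ := rInf_le (hp0 n) hθΘ
        have h3 : q n θ ≤ g n := le_rSup (fun θ' hθ' => hq1 n θ' (hΘ₁ hθ')) (hΘn1 n hθ)
        have := hB1 n θ hθ
        linarith
      refine limsup_le_of_le ?_ hev2
      refine isCoboundedUnder_le_of_eventually_le atTop (x := 0) ?_
      refine Eventually.of_forall fun n => rSup_nonneg fun θ hθ => ?_
      rw [hint1 n θ (hΘ₁ (hΘn1 n hθ))]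
      haveI := hprob n θ (hΘ₁ (hΘn1 n hθ))
      have : ((P n θ) (A n)).toReal ≤ 1 :=
        ENNReal.toReal_le_of_le_ofReal zero_le_one (by simpa using prob_le_one)
      linarith )
  }
end

section
/- Fix 0 < α < β < 1, a subset Θ₁ ⊆ Θ and positive numbers εₙ. Assume that for every sequence of measurable estimators Tₙ : Ωₙ → Θ one has liminf_n sup_{θ∈Θ₁} P_θ^{(n)}( d(Tₙ, θ) ≥ εₙ ) > β. Then every sequence of confidence sets Ĉₙ for which the events {ω : θ ∈ Ĉₙ(ω)} (for each θ ∈ Θ) and {ω : diam(Ĉₙ(ω)) ≥ εₙ} are measurable, which admits measurable selections Tₙ : Ωₙ → Θ with Tₙ(ω) ∈ Ĉₙ(ω) whenever Ĉₙ(ω) ≠ ∅, and which is honest, i.e. liminf_n inf_{θ∈Θ} P_θ^{(n)}(θ ∈ Ĉₙ) ≥ 1 − α, satisfies liminf_n sup_{θ ∈ Θ₁} P_θ^{(n)}( diam(Ĉₙ) ≥ εₙ ) > β − α. -/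
open MeasureTheory Filter

lemma sSup_image_eq_biSup_of_nonneg_aux {β : Type*} (s : Set β) (f : β → ℝ)
    (h0 : ∀ x, 0 ≤ f x) (h1 : ∀ x ∈ s, f x ≤ 1) : sSup (f '' s) = ⨆ x ∈ s, f x := by
  rcases s.eq_empty_or_nonempty with rfl | hne
  · simp
  · apply le_antisymm
    · apply csSup_le (hne.image f)
      rintro _ ⟨x, hx, rfl⟩
      have hb : BddAbove (Set.range fun x => ⨆ _ : x ∈ s, f x) :=
        ⟨1, by rintro _ ⟨y, rfl⟩; exact Real.iSup_le (fun hy => h1 y hy) zero_le_one⟩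
      exact le_ciSup_of_le hb x (by rw [ciSup_pos hx])
    · have hS0 : 0 ≤ sSup (f '' s) := Real.sSup_nonneg (by rintro _ ⟨y, _, rfl⟩; exact h0 y)
      exact Real.iSup_le (fun x => Real.iSup_le (fun hx =>
        le_csSup ⟨1, by rintro _ ⟨y, hy, rfl⟩; exact h1 y hy⟩ ⟨x, hx, rfl⟩) hS0) hS0

/-- Lemma 6.2: if for `0 < a < b < 1` every sequence of measurable
estimators `Tₙ : Ωₙ → Θ` satisfies
`liminfₙ sup_{θ∈Θ₁} P_θ^{(n)}(d(Tₙ,θ) ≥ εₙ) > b`, then every honest sequence of confidence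
sets `Ĉₙ ⊆ Θ` admitting measurable selections (i.e.
`liminfₙ inf_{θ∈Θ} P_θ^{(n)}(θ ∈ Ĉₙ) ≥ 1 - a`) satisfies
`liminfₙ sup_{θ∈Θ₁} P_θ^{(n)}(diam Ĉₙ ≥ εₙ) > b - a`. -/
theorem adaptive_ci_diameter_estimation_lower_bound
    {α : Type*} [MetricSpace α] [MeasurableSpace α]
    (Θ Θ₁ : Set α) (hΘ₁ : Θ₁ ⊆ Θ)
    (Ω : ℕ → Type*) [∀ n, MeasurableSpace (Ω n)]
    (P : (n : ℕ) → α → Measure (Ω n))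
    (hprob : ∀ n, ∀ θ ∈ Θ, IsProbabilityMeasure (P n θ))
    (a b : ℝ) (ha : 0 < a) (hab : a < b) (hb : b < 1)
    (εseq : ℕ → ℝ) (hε : ∀ n, 0 < εseq n)
    (hEst : ∀ T : (n : ℕ) → Ω n → α, (∀ n, Measurable (T n)) → (∀ n ω, T n ω ∈ Θ) →
      b < liminf (fun n =>
        sSup ((fun θ => ((P n θ) {ω | εseq n ≤ dist (T n ω) θ}).toReal) '' Θ₁)) atTop)
    (C : (n : ℕ) → Ω n → Set α) (hCsub : ∀ n ω, C n ω ⊆ Θ)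
    (hmeas_cover : ∀ n, ∀ θ ∈ Θ, MeasurableSet {ω | θ ∈ C n ω})
    (hmeas_diam : ∀ n, MeasurableSet {ω | ENNReal.ofReal (εseq n) ≤ EMetric.diam (C n ω)})
    (hsel : ∃ T : (n : ℕ) → Ω n → α, (∀ n, Measurable (T n)) ∧
      ∀ n ω, T n ω ∈ Θ ∧ ((C n ω).Nonempty → T n ω ∈ C n ω))
    (honest : 1 - a ≤
      liminf (fun n => sInf ((fun θ => ((P n θ) {ω | θ ∈ C n ω}).toReal) '' Θ)) atTop) :
    b - a < liminf (fun n =>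
      sSup ((fun θ => ((P n θ) {ω | ENNReal.ofReal (εseq n) ≤ EMetric.diam (C n ω)}).toReal) '' Θ₁))
      atTop := by
  obtain ⟨T, hTmeas, hT⟩ := hsel
  have hfb : b < liminf (fun n =>
      ⨆ θ ∈ Θ₁, ((P n θ) {ω | εseq n ≤ dist (T n ω) θ}).toReal) atTop := by
    have h := hEst T hTmeas (fun n ω => (hT n ω).1)
    have heq : (fun n => ⨆ θ ∈ Θ₁, ((P n θ) {ω | εseq n ≤ dist (T n ω) θ}).toReal) =
        fun n => sSup ((fun θ => ((P n θ) {ω | εseq n ≤ dist (T n ω) θ}).toReal) '' Θ₁) :=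
      funext fun n => (sSup_image_eq_biSup_of_nonneg_aux Θ₁ _ (fun _ => ENNReal.toReal_nonneg)
        (fun θ hθ => by
          have := hprob n θ (hΘ₁ hθ)
          exact ENNReal.toReal_le_of_le_ofReal zero_le_one
            (by rw [ENNReal.ofReal_one]; exact prob_le_one))).symm
    rw [heq]; exact h
  rcases Θ₁.eq_empty_or_nonempty with hΘ₁e | ⟨θ₀, hθ₀⟩
  · exfalso
    subst hΘ₁e
    simp only [Set.mem_empty_iff_false, Real.iSup_of_isEmpty, Real.iSup_const_zero,
      liminf_const] at hfb
    linarith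
  -- abbreviations
  set fseq : ℕ → ℝ := fun n =>
    ⨆ θ ∈ Θ₁, ((P n θ) {ω | εseq n ≤ dist (T n ω) θ}).toReal with hfseq
  set gseq : ℕ → ℝ := fun n =>
    ⨆ θ ∈ Θ₁, ((P n θ) {ω | ENNReal.ofReal (εseq n) ≤ EMetric.diam (C n ω)}).toReal with hgseq
  set hseq : ℕ → ℝ := fun n =>
    sInf ((fun θ => ((P n θ) {ω | θ ∈ C n ω}).toReal) '' Θ) with hhseq
  have hval01 : ∀ (n : ℕ) (θ : α), θ ∈ Θ → ∀ s : Set (Ω n),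
      ((P n θ) s).toReal ≤ 1 := by
    intro n θ hθ s
    have := hprob n θ hθ
    have h1 : (P n θ) s ≤ 1 := prob_le_one
    calc ((P n θ) s).toReal ≤ (1 : ENNReal).toReal :=
          ENNReal.toReal_mono ENNReal.one_ne_top h1
      _ = 1 := by simp
  -- bounds on gseq
  have hg0 : ∀ n, 0 ≤ gseq n := fun n =>
    Real.iSup_nonneg fun θ => Real.iSup_nonneg fun _ => ENNReal.toReal_nonneg
  have hg1 : ∀ n, gseq n ≤ 1 := fun n =>
    Real.iSup_le (fun θ => Real.iSup_le (fun hθ => hval01 n θ (hΘ₁ hθ) _) zero_le_one)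
      zero_le_one
  have hf0 : ∀ n, 0 ≤ fseq n := fun n =>
    Real.iSup_nonneg fun θ => Real.iSup_nonneg fun _ => ENNReal.toReal_nonneg
  have hh0 : ∀ n, 0 ≤ hseq n := fun n =>
    Real.sInf_nonneg (by rintro _ ⟨θ, _, rfl⟩; exact ENNReal.toReal_nonneg)
  -- hseq n ≤ P n θ {θ ∈ C} for θ ∈ Θ
  have hhle : ∀ (n : ℕ) (θ : α), θ ∈ Θ →
      hseq n ≤ ((P n θ) {ω | θ ∈ C n ω}).toReal := by
    intro n θ hθ
    exact csInf_le ⟨0, by rintro _ ⟨θ', _, rfl⟩; exact ENNReal.toReal_nonneg⟩ ⟨θ, hθ, rfl⟩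
  -- key pointwise bound
  have key : ∀ n, fseq n ≤ gseq n + (1 - hseq n) := by
    intro n
    have hh1 : hseq n ≤ 1 := (hhle n θ₀ (hΘ₁ hθ₀)).trans (hval01 n θ₀ (hΘ₁ hθ₀) _)
    refine Real.iSup_le (fun θ => Real.iSup_le (fun hθ => ?_) (by linarith [hg0 n]))
      (by linarith [hg0 n])
    have hθΘ : θ ∈ Θ := hΘ₁ hθ
    have := hprob n θ hθΘ
    -- set inclusion
    have hsub : {ω | εseq n ≤ dist (T n ω) θ} ⊆
        {ω | ENNReal.ofReal (εseq n) ≤ EMetric.diam (C n ω)} ∪ {ω | θ ∈ C n ω}ᶜ := by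
      intro ω hω
      by_cases hc : θ ∈ C n ω
      · left
        have hne : (C n ω).Nonempty := ⟨θ, hc⟩
        have hTc : T n ω ∈ C n ω := (hT n ω).2 hne
        have : ENNReal.ofReal (εseq n) ≤ edist (T n ω) θ := by
          rw [edist_dist]
          exact ENNReal.ofReal_le_ofReal hω
        exact this.trans (EMetric.edist_le_diam_of_mem hTc hc)
      · right; exact hc
    have hmeasd : ((P n θ) {ω | εseq n ≤ dist (T n ω) θ}).toReal ≤
        ((P n θ) {ω | ENNReal.ofReal (εseq n) ≤ EMetric.diam (C n ω)}).toReal +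
          ((P n θ) {ω | θ ∈ C n ω}ᶜ).toReal := by
      have h1 : (P n θ) {ω | εseq n ≤ dist (T n ω) θ} ≤
          (P n θ) {ω | ENNReal.ofReal (εseq n) ≤ EMetric.diam (C n ω)} +
            (P n θ) {ω | θ ∈ C n ω}ᶜ :=
        (measure_mono hsub).trans (measure_union_le _ _)
      calc ((P n θ) {ω | εseq n ≤ dist (T n ω) θ}).toReal
          ≤ ((P n θ) {ω | ENNReal.ofReal (εseq n) ≤ EMetric.diam (C n ω)} +
              (P n θ) {ω | θ ∈ C n ω}ᶜ).toReal :=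
            ENNReal.toReal_mono (by finiteness) h1
        _ = _ := ENNReal.toReal_add (measure_ne_top _ _) (measure_ne_top _ _)
    have hcompl : ((P n θ) {ω | θ ∈ C n ω}ᶜ).toReal =
        1 - ((P n θ) {ω | θ ∈ C n ω}).toReal := by
      rw [prob_compl_eq_one_sub (hmeas_cover n θ hθΘ)]
      rw [ENNReal.toReal_sub_of_le prob_le_one ENNReal.one_ne_top]
      simp
    have hgle : ((P n θ) {ω | ENNReal.ofReal (εseq n) ≤ EMetric.diam (C n ω)}).toReal ≤
        gseq n := by
      have hbdd : BddAbove (Set.range fun θ' =>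
          ⨆ _ : θ' ∈ Θ₁, ((P n θ') {ω | ENNReal.ofReal (εseq n) ≤
            EMetric.diam (C n ω)}).toReal) := by
        refine ⟨1, ?_⟩
        rintro x ⟨θ', rfl⟩
        exact Real.iSup_le (fun hθ' => hval01 n θ' (hΘ₁ hθ') _) zero_le_one
      calc ((P n θ) {ω | ENNReal.ofReal (εseq n) ≤ EMetric.diam (C n ω)}).toReal
          = ⨆ _ : θ ∈ Θ₁, ((P n θ) {ω | ENNReal.ofReal (εseq n) ≤
              EMetric.diam (C n ω)}).toReal := by rw [ciSup_pos hθ]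
        _ ≤ gseq n := le_ciSup hbdd θ
    have := hhle n θ hθΘ
    rw [hcompl] at hmeasd
    linarith
  -- filter argument
  have hfbd : IsBoundedUnder (· ≥ ·) atTop fseq := isBoundedUnder_of ⟨0, fun n => hf0 n⟩
  have hhbd : IsBoundedUnder (· ≥ ·) atTop hseq := isBoundedUnder_of ⟨0, fun n => hh0 n⟩
  set L := liminf fseq atTop with hL
  set c := (b + L) / 2 with hc
  set δ := (c - b) / 2 with hδ
  have hbc : b < c := by
    have : b < L := hfb
    rw [hc]; linarith
  have hδ0 : 0 < δ := by rw [hδ]; linarith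
  have hev1 : ∀ᶠ n in atTop, c < fseq n :=
    eventually_lt_of_lt_liminf (by rw [hc]; linarith [show b < L from hfb]) hfbd
  have hev2 : ∀ᶠ n in atTop, 1 - a - δ < hseq n :=
    eventually_lt_of_lt_liminf (by linarith [honest]) hhbd
  have hev : ∀ᶠ n in atTop, c - a - δ ≤ gseq n := by
    filter_upwards [hev1, hev2] with n h1 h2
    have := key n
    linarith
  have hcob : IsCoboundedUnder (· ≥ ·) atTop gseq :=
    IsBoundedUnder.isCoboundedUnder_ge (isBoundedUnder_of ⟨1, fun n => hg1 n⟩)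
  have : c - a - δ ≤ liminf gseq atTop := le_liminf_of_le hcob hev
  have : b - a < c - a - δ := by rw [hδ]; linarith
  have hgeq : (fun n => sSup ((fun θ => ((P n θ) {ω | ENNReal.ofReal (εseq n) ≤
      EMetric.diam (C n ω)}).toReal) '' Θ₁)) = gseq :=
    funext fun n => sSup_image_eq_biSup_of_nonneg_aux Θ₁ _ (fun _ => ENNReal.toReal_nonneg)
      (fun θ hθ => hval01 n θ (hΘ₁ hθ) _)
  rw [hgeq]
  linarith [le_liminf_of_le hcob hev]
end

section
/- Let X be a random variable with law f·μ. Then for every a ∈ ℝᵏ, the linear Hoeffding-projection term P₁h(X) = 2 Σᵢ₌₁ᵏ (θᵢ − aᵢ)( eᵢ(X) − θᵢ ) satisfies Var( P₁h(X) ) ≤ 4 E( Σᵢ₌₁ᵏ (θᵢ − aᵢ) eᵢ(X) )² ≤ 4 ‖f‖∞ Σᵢ₌₁ᵏ (θᵢ − aᵢ)². -/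
open MeasureTheory ProbabilityTheory
open scoped NNReal ENNReal

private lemma variance_sub_const' {Ω : Type*} [MeasurableSpace Ω] (P : Measure Ω)
    [IsProbabilityMeasure P] {Y : Ω → ℝ} (hY : MemLp Y 2 P) (m : ℝ) :
    variance (fun ω => Y ω - m) P = variance Y P := by
  have hZ : MemLp (fun ω => Y ω - m) 2 P := hY.sub (memLp_const m)
  rw [variance_eq_integral hZ.aemeasurable, variance_eq_integral hY.aemeasurable]
  have hint : ∫ ω, (Y ω - m) ∂P = (∫ ω, Y ω ∂P) - m := by
    rw [integral_sub (hY.integrable one_le_two) (integrable_const m), integral_const]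
    simp
  congr 1
  ext ω
  simp only [Pi.pow_apply, Pi.sub_apply, hint]
  ring

/-- in the density estimation model, for `X` with density `f` relative
to `μ` and `e₁, …, e_k` orthonormal in `L²(μ)` with `θᵢ = ∫ eᵢ f dμ`, the linear
Hoeffding-projection term `P₁h(X) = 2Σᵢ(θᵢ - aᵢ)(eᵢ(X) - θᵢ)` satisfies
`Var(P₁h(X)) ≤ 4E(Σᵢ(θᵢ - aᵢ)eᵢ(X))² ≤ 4‖f‖_∞ Σᵢ(θᵢ - aᵢ)²`
(`M` being an a.e. upper bound for `f`, e.g. its essential supremum). -/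
theorem adaptive_ci_density_linear_term
    {𝒳 : Type*} [MeasurableSpace 𝒳] (μ : Measure 𝒳) [SigmaFinite μ]
    (k : ℕ) (e : Fin k → 𝒳 → ℝ) (he : ∀ i, Measurable (e i))
    (horth : ∀ i j, ∫ x, e i x * e j x ∂μ = if i = j then 1 else 0)
    (f : 𝒳 → ℝ) (hf : Measurable f) (hf0 : ∀ x, 0 ≤ f x) (hf1 : ∫ x, f x ∂μ = 1)
    (M : ℝ) (hfM : ∀ᵐ x ∂μ, f x ≤ M)
    {Ω : Type*} [MeasurableSpace Ω] (P : Measure Ω) [IsProbabilityMeasure P]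
    (X : Ω → 𝒳) (hX : Measurable X)
    (hlaw : Measure.map X P = μ.withDensity (fun x => ENNReal.ofReal (f x)))
    (θ : Fin k → ℝ) (hθ : ∀ i, θ i = ∫ x, e i x * f x ∂μ)
    (a : Fin k → ℝ) :
    variance (fun ω => 2 * ∑ i, (θ i - a i) * (e i (X ω) - θ i)) P
        ≤ 4 * ∫ ω, (∑ i, (θ i - a i) * e i (X ω)) ^ 2 ∂P
      ∧ 4 * ∫ ω, (∑ i, (θ i - a i) * e i (X ω)) ^ 2 ∂P
        ≤ 4 * M * ∑ i, (θ i - a i) ^ 2 := by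
  set c : Fin k → ℝ := fun i => θ i - a i with hc
  set g : 𝒳 → ℝ := fun x => ∑ i, c i * e i x with hg
  have hgmeas : Measurable g := by
    apply Finset.measurable_sum
    exact fun i _ => (he i).const_mul _
  -- integrability of products e i * e j
  have heii : ∀ i, Integrable (fun x => e i x * e i x) μ := by
    intro i
    by_contra h
    have := integral_undef h
    rw [horth i i] at this
    simp at this
  have heij : ∀ i j, Integrable (fun x => e i x * e j x) μ := by
    intro i j
    refine Integrable.mono ((heii i).add (heii j)) ((he i).mul (he j)).aestronglyMeasurable ?_
    filter_upwards with x
    have h1 : |e i x * e j x| ≤ e i x * e i x + e j x * e j x := by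
      rw [abs_mul]
      nlinarith [sq_nonneg (|e i x| - |e j x|), sq_abs (e i x), sq_abs (e j x),
        abs_nonneg (e i x), abs_nonneg (e j x)]
    calc ‖e i x * e j x‖ = |e i x * e j x| := rfl
      _ ≤ e i x * e i x + e j x * e j x := h1
      _ ≤ |e i x * e i x + e j x * e j x| := le_abs_self _
      _ = ‖e i x * e i x + e j x * e j x‖ := rfl
  -- g² expansion and integrability w.r.t. μ
  have hg2eq : ∀ x, g x ^ 2 = ∑ i, ∑ j, (c i * c j) * (e i x * e j x) := by
    intro x
    rw [hg, sq, Finset.sum_mul_sum]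
    apply Finset.sum_congr rfl; intro i _
    apply Finset.sum_congr rfl; intro j _
    ring
  have hg2int : Integrable (fun x => g x ^ 2) μ := by
    have : Integrable (fun x => ∑ i, ∑ j : Fin k, (c i * c j) * (e i x * e j x)) μ := by
      apply integrable_finset_sum
      intro i _
      apply integrable_finset_sum
      intro j _
      exact (heij i j).const_mul _
    exact this.congr (Filter.Eventually.of_forall fun x => (hg2eq x).symm)
  have hg2val : ∫ x, g x ^ 2 ∂μ = ∑ i, c i ^ 2 := by
    simp_rw [hg2eq]
    rw [integral_finset_sum]
    · have : ∀ i : Fin k, ∫ x, ∑ j : Fin k, (c i * c j) * (e i x * e j x) ∂μ = c i ^ 2 := by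
        intro i
        rw [integral_finset_sum]
        · have : ∀ j : Fin k, ∫ x, (c i * c j) * (e i x * e j x) ∂μ
              = if i = j then c i ^ 2 else 0 := by
            intro j
            rw [integral_const_mul, horth i j]
            by_cases h : i = j
            · subst h; simp [sq]
            · simp [h]
          simp_rw [this]
          simp
        · exact fun j _ => (heij i j).const_mul _
      simp_rw [this]
    · intro i _
      apply integrable_finset_sum
      exact fun j _ => (heij i j).const_mul _
  have hg2nonneg : ∀ x, 0 ≤ g x ^ 2 := fun x => sq_nonneg _
  -- integrability of g² f and the bound
  have hfg2int : Integrable (fun x => g x ^ 2 * f x) μ := by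
    apply Integrable.mono' (hg2int.const_mul M)
      ((hgmeas.pow_const 2).mul hf).aestronglyMeasurable
    filter_upwards [hfM] with x hx
    rw [Real.norm_eq_abs, Pi.mul_apply, abs_of_nonneg (mul_nonneg (sq_nonneg _) (hf0 x))]
    calc g x ^ 2 * f x ≤ g x ^ 2 * M := by
          exact mul_le_mul_of_nonneg_left hx (sq_nonneg _)
      _ = M * g x ^ 2 := mul_comm _ _
  -- transfer : E[g(X)²] = ∫ g² f dμ
  have hlaw2 : ∫ ω, g (X ω) ^ 2 ∂P = ∫ x, g x ^ 2 * f x ∂μ := by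
    have h1 : ∫ ω, g (X ω) ^ 2 ∂P = ∫ x, g x ^ 2 ∂(Measure.map X P) := by
      rw [integral_map hX.aemeasurable (hgmeas.pow_const 2).aestronglyMeasurable]
    rw [h1, hlaw]
    have hfm : Measurable fun x => Real.toNNReal (f x) := hf.real_toNNReal
    have : (fun x => ENNReal.ofReal (f x)) = fun x => ((Real.toNNReal (f x) : ℝ≥0) : ℝ≥0∞) := by
      rfl
    rw [this, integral_withDensity_eq_integral_smul hfm]
    congr 1
    ext x
    rw [NNReal.smul_def, smul_eq_mul, Real.coe_toNNReal _ (hf0 x), mul_comm]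
  -- bound : E[g(X)²] ≤ M * ∑ c²
  have hbound : ∫ ω, g (X ω) ^ 2 ∂P ≤ M * ∑ i, c i ^ 2 := by
    rw [hlaw2, ← hg2val, ← integral_const_mul]
    apply integral_mono_ae hfg2int (hg2int.const_mul M)
    filter_upwards [hfM] with x hx
    calc g x ^ 2 * f x ≤ g x ^ 2 * M :=
          mul_le_mul_of_nonneg_left hx (sq_nonneg _)
      _ = M * g x ^ 2 := mul_comm _ _
  -- Memℒp of Y = g ∘ X
  have hYmeas : Measurable (fun ω => g (X ω)) := hgmeas.comp hX
  have hYint2 : Integrable (fun ω => g (X ω) ^ 2) P := by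
    have h1 : Integrable (fun x => g x ^ 2) (Measure.map X P) := by
      rw [hlaw]
      have heq : (fun x => ENNReal.ofReal (f x))
          = fun x => ((Real.toNNReal (f x) : ℝ≥0) : ℝ≥0∞) := rfl
      rw [heq, integrable_withDensity_iff_integrable_smul₀ hf.real_toNNReal.aemeasurable]
      apply hfg2int.congr
      filter_upwards with x
      rw [NNReal.smul_def, smul_eq_mul, Real.coe_toNNReal _ (hf0 x), mul_comm]
    exact (integrable_map_measure (hgmeas.pow_const 2).aestronglyMeasurable
      hX.aemeasurable).mp h1
  have hY2 : MemLp (fun ω => g (X ω)) 2 P :=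
    (memLp_two_iff_integrable_sq hYmeas.aestronglyMeasurable).mpr hYint2
  -- rewrite the random variable
  set m : ℝ := ∑ i, c i * θ i with hm
  have hrw : (fun ω => 2 * ∑ i, (θ i - a i) * (e i (X ω) - θ i))
      = fun ω => 2 * (g (X ω) - m) := by
    ext ω
    rw [hg, hm]
    simp only [Finset.mul_sum, ← Finset.sum_sub_distrib]
    congr 1
    funext i
    simp only [hc]
    ring
  have hvar : variance (fun ω => 2 * ∑ i, (θ i - a i) * (e i (X ω) - θ i)) P
      ≤ 4 * ∫ ω, g (X ω) ^ 2 ∂P := by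
    rw [hrw]
    have h1 : variance (fun ω => 2 * (g (X ω) - m)) P
        = 4 * variance (fun ω => g (X ω) - m) P := by
      rw [variance_const_mul]; norm_num
    rw [h1, variance_sub_const' P hY2 m]
    have := variance_le_expectation_sq (μ := P) hYmeas.aestronglyMeasurable
    have h2 : (P[(fun ω => g (X ω)) ^ 2]) = ∫ ω, g (X ω) ^ 2 ∂P := rfl
    linarith
  have hEeq : (∫ ω, (∑ i, (θ i - a i) * e i (X ω)) ^ 2 ∂P) = ∫ ω, g (X ω) ^ 2 ∂P := rfl
  constructor
  · rw [hEeq]; exact hvar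
  · rw [hEeq]
    have : 4 * M * ∑ i, c i ^ 2 = 4 * (M * ∑ i, c i ^ 2) := by ring
    rw [hc] at *
    calc 4 * ∫ ω, g (X ω) ^ 2 ∂P ≤ 4 * (M * ∑ i, (θ i - a i) ^ 2) := by
          linarith [hbound]
      _ = 4 * M * ∑ i, (θ i - a i) ^ 2 := by ring
end

section
/- Let X₁, X₂ be independent random variables each with law f·μ. Then the degenerate Hoeffding-projection term P₁₂h(X₁,X₂) = Σᵢ₌₁ᵏ ( eᵢ(X₁) − θᵢ )( eᵢ(X₂) − θᵢ ) satisfies Var( P₁₂h(X₁,X₂) ) ≤ E( Σᵢ₌₁ᵏ eᵢ(X₁) eᵢ(X₂) )² ≤ k ‖f‖∞². -/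
open MeasureTheory ProbabilityTheory
open scoped ENNReal

lemma pull_law {𝒳 : Type*} [MeasurableSpace 𝒳] (μ : Measure 𝒳)
    (f : 𝒳 → ℝ) (hf : Measurable f) (hf0 : ∀ x, 0 ≤ f x)
    {Ω : Type*} [MeasurableSpace Ω] (P : Measure Ω)
    (X : Ω → 𝒳) (hX : Measurable X)
    (hlaw : Measure.map X P = μ.withDensity (fun x => ENNReal.ofReal (f x)))
    (u : 𝒳 → ℝ) (hu : Measurable u) :
    ∫ ω, u (X ω) ∂P = ∫ x, u x * f x ∂μ := by
  rw [← integral_map hX.aemeasurable hu.aestronglyMeasurable, hlaw]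
  have h1 : (fun x => ENNReal.ofReal (f x)) = fun x => ((f x).toNNReal : ℝ≥0∞) := rfl
  rw [h1, integral_withDensity_eq_integral_smul (hf.real_toNNReal) u]
  congr 1; funext x
  simp [NNReal.smul_def, Real.coe_toNNReal _ (hf0 x), mul_comm]

lemma pull_int {𝒳 : Type*} [MeasurableSpace 𝒳] (μ : Measure 𝒳)
    (f : 𝒳 → ℝ) (hf : Measurable f) (hf0 : ∀ x, 0 ≤ f x)
    {Ω : Type*} [MeasurableSpace Ω] (P : Measure Ω)
    (X : Ω → 𝒳) (hX : Measurable X)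
    (hlaw : Measure.map X P = μ.withDensity (fun x => ENNReal.ofReal (f x)))
    (u : 𝒳 → ℝ) (hu : Measurable u)
    (hint : Integrable (fun x => u x * f x) μ) :
    Integrable (fun ω => u (X ω)) P := by
  have h : Integrable u (Measure.map X P) := by
    rw [hlaw, integrable_withDensity_iff hf.ennreal_ofReal
      (Filter.Eventually.of_forall fun x => ENNReal.ofReal_lt_top)]
    refine hint.congr (Filter.Eventually.of_forall fun x => ?_)
    simp [ENNReal.toReal_ofReal (hf0 x)]
  exact (integrable_map_measure hu.aestronglyMeasurable hX.aemeasurable).mp h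
lemma prod_exp {𝒳 : Type*} [MeasurableSpace 𝒳] (μ : Measure 𝒳)
    (f : 𝒳 → ℝ) (hf : Measurable f) (hf0 : ∀ x, 0 ≤ f x)
    {Ω : Type*} [MeasurableSpace Ω] (P : Measure Ω)
    (X₁ X₂ : Ω → 𝒳) (hX₁ : Measurable X₁) (hX₂ : Measurable X₂)
    (hindep : IndepFun X₁ X₂ P)
    (hlaw₁ : Measure.map X₁ P = μ.withDensity (fun x => ENNReal.ofReal (f x)))
    (hlaw₂ : Measure.map X₂ P = μ.withDensity (fun x => ENNReal.ofReal (f x)))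
    (u v : 𝒳 → ℝ) (hu : Measurable u) (hv : Measurable v) :
    ∫ ω, u (X₁ ω) * v (X₂ ω) ∂P = (∫ x, u x * f x ∂μ) * (∫ x, v x * f x ∂μ) := by
  have h := (hindep.comp hu hv).integral_fun_mul_eq_mul_integral
    ((hu.comp hX₁).aestronglyMeasurable) ((hv.comp hX₂).aestronglyMeasurable)
  calc ∫ ω, u (X₁ ω) * v (X₂ ω) ∂P
      = (∫ ω, u (X₁ ω) ∂P) * ∫ ω, v (X₂ ω) ∂P := h
    _ = (∫ x, u x * f x ∂μ) * (∫ x, v x * f x ∂μ) := by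
        rw [pull_law μ f hf hf0 P X₁ hX₁ hlaw₁ u hu, pull_law μ f hf hf0 P X₂ hX₂ hlaw₂ v hv]

lemma sum_sq_exp {𝒳 : Type*} [MeasurableSpace 𝒳] (μ : Measure 𝒳)
    (f : 𝒳 → ℝ) (hf : Measurable f) (hf0 : ∀ x, 0 ≤ f x)
    {Ω : Type*} [MeasurableSpace Ω] (P : Measure Ω)
    (X₁ X₂ : Ω → 𝒳) (hX₁ : Measurable X₁) (hX₂ : Measurable X₂)
    (hindep : IndepFun X₁ X₂ P)
    (hlaw₁ : Measure.map X₁ P = μ.withDensity (fun x => ENNReal.ofReal (f x)))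
    (hlaw₂ : Measure.map X₂ P = μ.withDensity (fun x => ENNReal.ofReal (f x)))
    (k : ℕ) (u : Fin k → 𝒳 → ℝ) (hu : ∀ i, Measurable (u i))
    (huf : ∀ i j, Integrable (fun x => u i x * u j x * f x) μ) :
    ∫ ω, (∑ i, u i (X₁ ω) * u i (X₂ ω)) ^ 2 ∂P
      = ∑ i, ∑ j, (∫ x, u i x * u j x * f x ∂μ) ^ 2 := by
  have hexp : ∀ ω, (∑ i, u i (X₁ ω) * u i (X₂ ω)) ^ 2
      = ∑ i, ∑ j, (u i (X₁ ω) * u j (X₁ ω)) * (u i (X₂ ω) * u j (X₂ ω)) := by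
    intro ω
    rw [sq, Finset.sum_mul_sum]
    exact Finset.sum_congr rfl fun i _ => Finset.sum_congr rfl fun j _ => by ring
  have hint : ∀ i j : Fin k,
      Integrable (fun ω => (u i (X₁ ω) * u j (X₁ ω)) * (u i (X₂ ω) * u j (X₂ ω))) P := by
    intro i j
    have h1 : Integrable (fun ω => u i (X₁ ω) * u j (X₁ ω)) P :=
      pull_int μ f hf hf0 P X₁ hX₁ hlaw₁ _ ((hu i).mul (hu j)) (huf i j)
    have h2 : Integrable (fun ω => u i (X₂ ω) * u j (X₂ ω)) P :=
      pull_int μ f hf hf0 P X₂ hX₂ hlaw₂ _ ((hu i).mul (hu j)) (huf i j)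
    exact (hindep.comp ((hu i).mul (hu j)) ((hu i).mul (hu j))).integrable_mul h1 h2
  calc ∫ ω, (∑ i, u i (X₁ ω) * u i (X₂ ω)) ^ 2 ∂P
      = ∫ ω, ∑ i, ∑ j, (u i (X₁ ω) * u j (X₁ ω)) * (u i (X₂ ω) * u j (X₂ ω)) ∂P := by
        simp_rw [hexp]
    _ = ∑ i, ∑ j, ∫ ω, (u i (X₁ ω) * u j (X₁ ω)) * (u i (X₂ ω) * u j (X₂ ω)) ∂P := by
        rw [integral_finset_sum _ fun i _ => integrable_finset_sum _ fun j _ => hint i j]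
        exact Finset.sum_congr rfl fun i _ => integral_finset_sum _ fun j _ => hint i j
    _ = ∑ i, ∑ j, (∫ x, u i x * u j x * f x ∂μ) ^ 2 := by
        refine Finset.sum_congr rfl fun i _ => Finset.sum_congr rfl fun j _ => ?_
        rw [prod_exp μ f hf hf0 P X₁ X₂ hX₁ hX₂ hindep hlaw₁ hlaw₂ (fun x => u i x * u j x) (fun x => u i x * u j x)
          ((hu i).mul (hu j)) ((hu i).mul (hu j)), sq]

/-- Elementary Bessel inequality: for `e j` orthonormal and `g ∈ L²`,
`∑ j (⟨g, e j⟩)² ≤ ‖g‖²`. -/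
lemma bessel_aux {𝒳 : Type*} [MeasurableSpace 𝒳] (μ : Measure 𝒳)
    (k : ℕ) (e : Fin k → 𝒳 → ℝ)
    (horth : ∀ i j, ∫ x, e i x * e j x ∂μ = if i = j then 1 else 0)
    (hee : ∀ i j, Integrable (fun x => e i x * e j x) μ)
    (g : 𝒳 → ℝ) (hg2 : Integrable (fun x => g x * g x) μ)
    (hge : ∀ j, Integrable (fun x => g x * e j x) μ) :
    ∑ j, (∫ x, g x * e j x ∂μ) ^ 2 ≤ ∫ x, g x * g x ∂μ := by
  set c : Fin k → ℝ := fun j => ∫ x, g x * e j x ∂μ with hc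
  have hpt : ∀ x, (g x - ∑ j, c j * e j x) ^ 2
      = (g x * g x - 2 * ∑ j, c j * (g x * e j x))
        + ∑ j, ∑ l, (c j * c l) * (e j x * e l x) := by
    intro x
    have hs : (∑ j, c j * e j x) * (∑ l, c l * e l x)
        = ∑ j, ∑ l, (c j * c l) * (e j x * e l x) := by
      rw [Finset.sum_mul_sum]
      exact Finset.sum_congr rfl fun j _ => Finset.sum_congr rfl fun l _ => by ring
    have hgs : g x * (∑ j, c j * e j x) = ∑ j, c j * (g x * e j x) := by
      rw [Finset.mul_sum]
      exact Finset.sum_congr rfl fun j _ => by ring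
    calc (g x - ∑ j, c j * e j x) ^ 2
        = g x * g x - 2 * (g x * ∑ j, c j * e j x)
          + (∑ j, c j * e j x) * (∑ l, c l * e l x) := by ring
      _ = _ := by rw [hs, hgs]
  have intS : Integrable (fun x => ∑ j, c j * (g x * e j x)) μ :=
    integrable_finset_sum _ fun j _ => (hge j).const_mul (c j)
  have int1 : Integrable (fun x => g x * g x - 2 * ∑ j, c j * (g x * e j x)) μ :=
    hg2.sub (intS.const_mul 2)
  have int2 : Integrable (fun x => ∑ j, ∑ l, (c j * c l) * (e j x * e l x)) μ :=
    integrable_finset_sum _ fun j _ => integrable_finset_sum _ fun l _ =>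
      (hee j l).const_mul _
  have h0 : (0:ℝ) ≤ ∫ x, (g x - ∑ j, c j * e j x) ^ 2 ∂μ :=
    integral_nonneg fun x => sq_nonneg _
  have hIS : ∫ x, ∑ j, c j * (g x * e j x) ∂μ = ∑ j, c j * c j := by
    rw [integral_finset_sum _ fun j _ => (hge j).const_mul (c j)]
    exact Finset.sum_congr rfl fun j _ => by rw [integral_const_mul]
  have hI2 : ∫ x, ∑ j, ∑ l, (c j * c l) * (e j x * e l x) ∂μ = ∑ j, c j * c j := by
    rw [integral_finset_sum _ fun j _ => integrable_finset_sum _ fun l _ =>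
      (hee j l).const_mul _]
    refine Finset.sum_congr rfl fun j _ => ?_
    rw [integral_finset_sum _ fun l _ => (hee j l).const_mul _]
    have : ∀ l : Fin k, ∫ x, (c j * c l) * (e j x * e l x) ∂μ
        = if j = l then c j * c l else 0 := by
      intro l
      rw [integral_const_mul, horth j l]
      split <;> simp
    simp_rw [this]
    simp
  have hItot : ∫ x, (g x - ∑ j, c j * e j x) ^ 2 ∂μ
      = (∫ x, g x * g x ∂μ) - 2 * (∑ j, c j * c j) + ∑ j, c j * c j := by
    simp_rw [hpt]
    rw [integral_add int1 int2, integral_sub hg2 (intS.const_mul 2),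
      integral_const_mul, hIS, hI2]
  rw [hItot] at h0
  have : ∑ j, c j ^ 2 = ∑ j, c j * c j := Finset.sum_congr rfl fun j _ => sq (c j) ▸ rfl
  rw [this]
  linarith

/-- in the density estimation model, for `X₁, X₂` independent, each with
density `f` relative to `μ`, and `e₁, …, e_k` orthonormal in `L²(μ)` with
`θᵢ = ∫ eᵢ f dμ`, the degenerate Hoeffding-projection term
`P₁₂h(X₁,X₂) = Σᵢ(eᵢ(X₁) - θᵢ)(eᵢ(X₂) - θᵢ)` satisfies
`Var(P₁₂h(X₁,X₂)) ≤ E(Σᵢ eᵢ(X₁)eᵢ(X₂))² ≤ k‖f‖_∞²`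
(`M` being an a.e. upper bound for `f`, e.g. its essential supremum). -/
theorem adaptive_ci_density_degenerate_term
    {𝒳 : Type*} [MeasurableSpace 𝒳] (μ : Measure 𝒳) [SigmaFinite μ]
    (k : ℕ) (e : Fin k → 𝒳 → ℝ) (he : ∀ i, Measurable (e i))
    (horth : ∀ i j, ∫ x, e i x * e j x ∂μ = if i = j then 1 else 0)
    (f : 𝒳 → ℝ) (hf : Measurable f) (hf0 : ∀ x, 0 ≤ f x) (hf1 : ∫ x, f x ∂μ = 1)
    (M : ℝ) (hfM : ∀ᵐ x ∂μ, f x ≤ M)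
    {Ω : Type*} [MeasurableSpace Ω] (P : Measure Ω) [IsProbabilityMeasure P]
    (X₁ X₂ : Ω → 𝒳) (hX₁ : Measurable X₁) (hX₂ : Measurable X₂)
    (hindep : IndepFun X₁ X₂ P)
    (hlaw₁ : Measure.map X₁ P = μ.withDensity (fun x => ENNReal.ofReal (f x)))
    (hlaw₂ : Measure.map X₂ P = μ.withDensity (fun x => ENNReal.ofReal (f x)))
    (θ : Fin k → ℝ) (hθ : ∀ i, θ i = ∫ x, e i x * f x ∂μ) :
    variance (fun ω => ∑ i, (e i (X₁ ω) - θ i) * (e i (X₂ ω) - θ i)) P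
        ≤ ∫ ω, (∑ i, e i (X₁ ω) * e i (X₂ ω)) ^ 2 ∂P
      ∧ ∫ ω, (∑ i, e i (X₁ ω) * e i (X₂ ω)) ^ 2 ∂P ≤ (k : ℝ) * M ^ 2 := by
  -- basic integrability facts
  have hfint : Integrable f μ := by
    by_contra h
    rw [integral_undef h] at hf1
    norm_num at hf1
  have hsq : ∀ i, Integrable (fun x => e i x * e i x) μ := by
    intro i
    by_contra h
    have := horth i i
    rw [integral_undef h] at this
    simp at this
  have hee : ∀ i j, Integrable (fun x => e i x * e j x) μ := by
    intro i j
    have hbd : Integrable (fun x => (e i x * e i x + e j x * e j x) / 2) μ := by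
      exact ((hsq i).add (hsq j)).div_const 2
    refine Integrable.mono' hbd (((he i).mul (he j)).aestronglyMeasurable)
      (Filter.Eventually.of_forall fun x => ?_)
    rw [Real.norm_eq_abs, abs_mul]
    nlinarith [sq_nonneg (|e i x| - |e j x|), sq_abs (e i x), sq_abs (e j x),
      abs_nonneg (e i x), abs_nonneg (e j x)]
  have heef : ∀ i j, Integrable (fun x => e i x * e j x * f x) μ := by
    intro i j
    refine Integrable.mono' ((hee i j).abs.const_mul M)
      ((((he i).mul (he j)).mul hf).aestronglyMeasurable) ?_
    filter_upwards [hfM] with x hx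
    rw [Real.norm_eq_abs, abs_mul, abs_of_nonneg (hf0 x)]
    have h1 : 0 ≤ |e i x * e j x| := abs_nonneg _
    nlinarith
  have hef : ∀ i, Integrable (fun x => e i x * f x) μ := by
    intro i
    have hbd : Integrable (fun x => (M * (e i x * e i x) + f x) / 2) μ := by
      exact (((hsq i).const_mul M).add hfint).div_const 2
    refine Integrable.mono' hbd (((he i).mul hf).aestronglyMeasurable) ?_
    filter_upwards [hfM] with x hx
    rw [Real.norm_eq_abs, abs_mul, abs_of_nonneg (hf0 x)]
    have h1 : 0 ≤ |e i x| := abs_nonneg _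
    have h2 : 2 * |e i x| ≤ e i x * e i x + 1 := by
      nlinarith [sq_nonneg (|e i x| - 1), sq_abs (e i x)]
    have h3 : 0 ≤ f x := hf0 x
    nlinarith
  have hM0 : 0 ≤ M := by
    by_contra h
    push_neg at h
    have hae : ∀ᵐ (_x : 𝒳) ∂μ, False := by
      filter_upwards [hfM] with x hx
      exact absurd (le_trans (hf0 x) hx) (not_le.2 h)
    have hμ : μ = 0 := ae_eq_bot.mp (Filter.eventually_false_iff_eq_bot.mp hae)
    simp [hμ] at hf1
  set a : Fin k → Fin k → ℝ := fun i j => ∫ x, e i x * e j x * f x ∂μ with ha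
  have hEK : ∫ ω, (∑ i, e i (X₁ ω) * e i (X₂ ω)) ^ 2 ∂P = ∑ i, ∑ j, a i j ^ 2 :=
    sum_sq_exp μ f hf hf0 P X₁ X₂ hX₁ hX₂ hindep hlaw₁ hlaw₂ k e he heef
  -- second inequality via Bessel
  have hBessel : ∀ i, ∑ j, a i j ^ 2 ≤ M ^ 2 := by
    intro i
    have hg2 : Integrable (fun x => (e i x * f x) * (e i x * f x)) μ := by
      refine Integrable.mono' ((hsq i).const_mul (M ^ 2))
        ((((he i).mul hf).mul ((he i).mul hf)).aestronglyMeasurable) ?_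
      filter_upwards [hfM] with x hx
      rw [Real.norm_eq_abs]
      have h3 : 0 ≤ f x := hf0 x
      rw [abs_of_nonneg (by nlinarith : (0:ℝ) ≤ (e i x * f x) * (e i x * f x))]
      nlinarith [mul_le_mul_of_nonneg_left (mul_self_le_mul_self h3 hx)
        (mul_self_nonneg (e i x))]
    have hge : ∀ j, Integrable (fun x => (e i x * f x) * e j x) μ := fun j =>
      (heef i j).congr (Filter.Eventually.of_forall fun x => by ring)
    have hb := bessel_aux μ k e horth hee (fun x => e i x * f x) hg2 hge
    have h1 : ∀ j, ∫ x, (e i x * f x) * e j x ∂μ = a i j := fun j =>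
      integral_congr_ae (Filter.Eventually.of_forall fun x => by ring)
    have h2 : ∫ x, (e i x * f x) * (e i x * f x) ∂μ ≤ M ^ 2 := by
      have hmono : ∫ x, (e i x * f x) * (e i x * f x) ∂μ
          ≤ ∫ x, M ^ 2 * (e i x * e i x) ∂μ := by
        refine integral_mono_ae hg2 ((hsq i).const_mul _) ?_
        filter_upwards [hfM] with x hx
        have h3 : 0 ≤ f x := hf0 x
        nlinarith [mul_le_mul_of_nonneg_left (mul_self_le_mul_self h3 hx)
          (mul_self_nonneg (e i x))]
      rw [integral_const_mul, horth i i] at hmono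
      simpa using hmono
    calc ∑ j, a i j ^ 2 = ∑ j, (∫ x, (e i x * f x) * e j x ∂μ) ^ 2 := by
          exact Finset.sum_congr rfl fun j _ => by rw [h1 j]
      _ ≤ ∫ x, (e i x * f x) * (e i x * f x) ∂μ := hb
      _ ≤ M ^ 2 := h2
  have h2nd : ∑ i, ∑ j, a i j ^ 2 ≤ (k : ℝ) * M ^ 2 := by
    calc ∑ i, ∑ j, a i j ^ 2 ≤ ∑ _i : Fin k, M ^ 2 :=
          Finset.sum_le_sum fun i _ => hBessel i
      _ = (k : ℝ) * M ^ 2 := by simp [Finset.sum_const, nsmul_eq_mul]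
  -- first inequality
  set u : Fin k → 𝒳 → ℝ := fun i x => e i x - θ i with hudef
  have hu : ∀ i, Measurable (u i) := fun i => (he i).sub measurable_const
  have hufint : ∀ i j, Integrable (fun x => u i x * u j x * f x) μ := by
    intro i j
    have h : Integrable (fun x => e i x * e j x * f x - θ i * (e j x * f x)
        - θ j * (e i x * f x) + (θ i * θ j) * f x) μ :=
      (((heef i j).sub ((hef j).const_mul _)).sub ((hef i).const_mul _)).add
        (hfint.const_mul _)
    exact h.congr (Filter.Eventually.of_forall fun x => by simp only [hudef]; ring)
  have hbval : ∀ i j, ∫ x, u i x * u j x * f x ∂μ = a i j - θ i * θ j := by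
    intro i j
    have hrw : (fun x => u i x * u j x * f x) = fun x => e i x * e j x * f x
        - θ i * (e j x * f x) - θ j * (e i x * f x) + (θ i * θ j) * f x :=
      funext fun x => by simp only [hudef]; ring
    have I1 : Integrable (fun x => θ i * (e j x * f x)) μ := (hef j).const_mul _
    have I2 : Integrable (fun x => θ j * (e i x * f x)) μ := (hef i).const_mul _
    have I3 : Integrable (fun x => e i x * e j x * f x - θ i * (e j x * f x)) μ := by
      exact (heef i j).sub I1
    have I4 : Integrable
        (fun x => e i x * e j x * f x - θ i * (e j x * f x) - θ j * (e i x * f x)) μ := by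
      exact I3.sub I2
    have I5 : Integrable (fun x => (θ i * θ j) * f x) μ := hfint.const_mul _
    rw [hrw, integral_add I4 I5, integral_sub I3 I2, integral_sub (heef i j) I1,
      integral_const_mul, integral_const_mul, integral_const_mul, hf1, ← hθ i, ← hθ j]
    ring
  have hEY : ∫ ω, (∑ i, u i (X₁ ω) * u i (X₂ ω)) ^ 2 ∂P
      = ∑ i, ∑ j, (a i j - θ i * θ j) ^ 2 := by
    rw [sum_sq_exp μ f hf hf0 P X₁ X₂ hX₁ hX₂ hindep hlaw₁ hlaw₂ k u hu hufint]
    exact Finset.sum_congr rfl fun i _ => Finset.sum_congr rfl fun j _ => by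
      rw [hbval i j]
  have hvar : variance (fun ω => ∑ i, (e i (X₁ ω) - θ i) * (e i (X₂ ω) - θ i)) P
      ≤ ∫ ω, (∑ i, u i (X₁ ω) * u i (X₂ ω)) ^ 2 ∂P := by
    have hm : AEStronglyMeasurable
        (fun ω => ∑ i, (e i (X₁ ω) - θ i) * (e i (X₂ ω) - θ i)) P :=
      (Finset.measurable_sum _ fun i _ =>
        (((he i).comp hX₁).sub measurable_const).mul
          (((he i).comp hX₂).sub measurable_const)).aestronglyMeasurable
    have h := variance_le_expectation_sq (μ := P) hm
    simpa [hudef] using h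
  -- Cauchy-Schwarz step
  have hS : (∑ i, θ i ^ 2) ^ 2 ≤ ∑ i, ∑ j, (θ i * θ j) * a i j := by
    set g : 𝒳 → ℝ := fun x => ∑ i, θ i * e i x with hg
    set c : ℝ := ∑ i, θ i ^ 2 with hcdef
    have hgg : ∀ x, g x * g x * f x = ∑ i, ∑ j, (θ i * θ j) * (e i x * e j x * f x) := by
      intro x
      calc g x * g x * f x
          = (∑ i, ∑ j, (θ i * e i x) * (θ j * e j x)) * f x := by
            rw [hg, Finset.sum_mul_sum]
        _ = ∑ i, (∑ j, (θ i * e i x) * (θ j * e j x)) * f x := by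
            rw [Finset.sum_mul]
        _ = ∑ i, ∑ j, (θ i * θ j) * (e i x * e j x * f x) := by
            refine Finset.sum_congr rfl fun i _ => ?_
            rw [Finset.sum_mul]
            exact Finset.sum_congr rfl fun j _ => by ring
    have hgf : ∀ x, g x * f x = ∑ i, θ i * (e i x * f x) := by
      intro x
      rw [hg, Finset.sum_mul]
      exact Finset.sum_congr rfl fun i _ => by ring
    have hIg2f : Integrable (fun x => g x * g x * f x) μ := by
      refine (integrable_finset_sum _ fun i _ => integrable_finset_sum _ fun j _ =>
        (heef i j).const_mul (θ i * θ j)).congr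
        (Filter.Eventually.of_forall fun x => (hgg x).symm)
    have hIgf : Integrable (fun x => g x * f x) μ := by
      refine (integrable_finset_sum _ fun i _ => (hef i).const_mul (θ i)).congr
        (Filter.Eventually.of_forall fun x => (hgf x).symm)
    have hvgf : ∫ x, g x * f x ∂μ = c := by
      rw [integral_congr_ae (Filter.Eventually.of_forall hgf),
        integral_finset_sum _ fun i _ => (hef i).const_mul (θ i)]
      refine Finset.sum_congr rfl fun i _ => ?_
      rw [integral_const_mul, ← hθ i, sq]
    have hvg2f : ∫ x, g x * g x * f x ∂μ = ∑ i, ∑ j, (θ i * θ j) * a i j := by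
      rw [integral_congr_ae (Filter.Eventually.of_forall hgg),
        integral_finset_sum _ fun i _ => integrable_finset_sum _ fun j _ =>
          (heef i j).const_mul (θ i * θ j)]
      refine Finset.sum_congr rfl fun i _ => ?_
      rw [integral_finset_sum _ fun j _ => (heef i j).const_mul (θ i * θ j)]
      exact Finset.sum_congr rfl fun j _ => integral_const_mul _ _
    have h0 : (0:ℝ) ≤ ∫ x, (g x - c) ^ 2 * f x ∂μ :=
      integral_nonneg fun x => mul_nonneg (sq_nonneg _) (hf0 x)
    have hpt : ∀ x, (g x - c) ^ 2 * f x
        = g x * g x * f x - (2 * c) * (g x * f x) + (c ^ 2) * f x := fun x => by ring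
    have hItot : ∫ x, (g x - c) ^ 2 * f x ∂μ
        = (∑ i, ∑ j, (θ i * θ j) * a i j) - 2 * c * c + c ^ 2 := by
      rw [integral_congr_ae (Filter.Eventually.of_forall hpt)]
      have I1 : Integrable (fun x => (2 * c) * (g x * f x)) μ := hIgf.const_mul _
      have I2 : Integrable (fun x => g x * g x * f x - (2 * c) * (g x * f x)) μ := by
        exact hIg2f.sub I1
      rw [integral_add I2 (hfint.const_mul (c ^ 2)), integral_sub hIg2f I1,
        integral_const_mul, integral_const_mul, hvgf, hvg2f, hf1, mul_one, mul_assoc]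
    rw [hItot] at h0
    nlinarith [h0]
  have halg : ∑ i, ∑ j, (a i j - θ i * θ j) ^ 2 ≤ ∑ i, ∑ j, a i j ^ 2 := by
    have hexp : ∑ i, ∑ j, (a i j - θ i * θ j) ^ 2
        = (∑ i, ∑ j, a i j ^ 2) - 2 * (∑ i, ∑ j, (θ i * θ j) * a i j)
          + (∑ i, θ i ^ 2) ^ 2 := by
      have h1 : ∀ i j : Fin k, (a i j - θ i * θ j) ^ 2
          = a i j ^ 2 - 2 * ((θ i * θ j) * a i j) + θ i ^ 2 * θ j ^ 2 :=
        fun i j => by ring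
      simp_rw [h1]
      rw [Finset.sum_congr rfl fun i (_ : i ∈ Finset.univ) =>
        (Finset.sum_add_distrib (s := Finset.univ))]
      rw [Finset.sum_add_distrib]
      rw [Finset.sum_congr rfl fun i (_ : i ∈ Finset.univ) =>
        (Finset.sum_sub_distrib (s := Finset.univ) _ _)]
      rw [Finset.sum_sub_distrib]
      have h2 : ∑ i, ∑ j, 2 * ((θ i * θ j) * a i j)
          = 2 * ∑ i, ∑ j, (θ i * θ j) * a i j := by
        rw [Finset.mul_sum]
        exact Finset.sum_congr rfl fun i _ => (Finset.mul_sum _ _ _).symm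
      have h3 : ∑ i, ∑ j, θ i ^ 2 * θ j ^ 2 = (∑ i, θ i ^ 2) ^ 2 := by
        rw [sq (∑ i, θ i ^ 2), Finset.sum_mul_sum]
      rw [h2, h3]
    rw [hexp]
    nlinarith [hS]
  refine ⟨?_, ?_⟩
  · calc variance (fun ω => ∑ i, (e i (X₁ ω) - θ i) * (e i (X₂ ω) - θ i)) P
        ≤ ∫ ω, (∑ i, u i (X₁ ω) * u i (X₂ ω)) ^ 2 ∂P := hvar
      _ = ∑ i, ∑ j, (a i j - θ i * θ j) ^ 2 := hEY
      _ ≤ ∑ i, ∑ j, a i j ^ 2 := halg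
      _ = ∫ ω, (∑ i, e i (X₁ ω) * e i (X₂ ω)) ^ 2 ∂P := hEK.symm
  · rw [hEK]; exact h2nd
end
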